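/- arXiv:2507.07007 — 5 statements merged into one kernel-verified Lean document; each statement's English description precedes it below -/
import Mathlib

section
/- Let (m_1,r_1),…,(m_n,r_n) with m_i ∈ ℝ², r_i > 0, and let H_v : S¹ → ℕ be the sum of the signal functions. For every x ∈ S¹, the map t ↦ H_v(R_t x) is constant on some interval (0,δ) and constant on some interval (−δ,0) for some δ > 0 (where R_t denotes rotation of the plane by angle t about the origin); in particular, H_v has only finitely many discontinuity points on S¹. -/
/-!
Along the orbit `t ↦ rot t x`, the sign of `‖rot t x - m‖² - r²` decides the signal of the disk
`(m, r)`. This is a real-analytic function of `t`, so near `t = 0` it either vanishes identically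
or has no zero on either side of `0`; by the intermediate value theorem its sign, hence the
signal and the sum `Hsum v`, is then constant on each side. Since `z ↦ arg (z / x)` is a
continuous inverse of the orbit map near `x`, `Hsum v` is continuous within `S¹` at every point
of a punctured neighbourhood of `x`. So the discontinuities have no accumulation point in the
compact circle and are finitely many.
-/

noncomputable section

open scoped BigOperators
open Classical

/-- The unit circle `S¹` in the plane (modeled as `ℂ ≅ ℝ²` with the Euclidean norm). -/
def S1 : Set ℂ := {x : ℂ | ‖x‖ = 1}

/-- The signal function `h_{(m,r)}`: indicator of the closed disk of center `m`, radius `r`. -/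
def signal (m : ℂ) (r : ℝ) (x : ℂ) : ℕ := if ‖x - m‖ ≤ r then 1 else 0

/-- The boundary trace `∂h_{(m,r)} = {x ∈ S¹ : ‖x − m‖ = r}`. -/
def bTrace (m : ℂ) (r : ℝ) : Set ℂ := {x : ℂ | ‖x‖ = 1 ∧ ‖x - m‖ = r}

/-- The sum `H_v` of the signal functions of the disk data `v = ((m_i, r_i))_{i<n}`. -/
def Hsum {n : ℕ} (v : Fin n → ℂ × ℝ) (x : ℂ) : ℕ := ∑ i, signal (v i).1 (v i).2 x

/-- Rotation of the plane by angle `t` about the origin. -/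
def rot (t : ℝ) (x : ℂ) : ℂ := Complex.exp (t * Complex.I) * x

/-- `H(x⁺) = a`: `H` equals `a` just after `x` (counterclockwise). -/
def rightVal (H : ℂ → ℕ) (x : ℂ) (a : ℕ) : Prop :=
  ∃ δ > (0 : ℝ), ∀ t : ℝ, 0 < t → t < δ → H (rot t x) = a

/-- `H(x⁻) = b`: `H` equals `b` just before `x`. -/
def leftVal (H : ℂ → ℕ) (x : ℂ) (b : ℕ) : Prop :=
  ∃ δ > (0 : ℝ), ∀ t : ℝ, -δ < t → t < 0 → H (rot t x) = b

/-- `H` is properly upper semicontinuous on `S¹`: at each point both one-sided limits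
exist and the value equals their maximum. -/
def ProperlyUSC (H : ℂ → ℕ) : Prop :=
  ∀ x ∈ S1, ∃ a b : ℕ, rightVal H x a ∧ leftVal H x b ∧ H x = max a b

/-- `H* = max_{S¹} H`. -/
def maxOnS1 (H : ℂ → ℕ) : ℕ := sSup (H '' S1)

/-- `H_* = min_{S¹} H`. -/
def minOnS1 (H : ℂ → ℕ) : ℕ := sInf (H '' S1)

/-- The superlevel set `{x ∈ S¹ : H(x) ≥ k}`. -/
def superlevel (H : ℂ → ℕ) (k : ℕ) : Set ℂ := {x ∈ S1 | k ≤ H x}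

/-- Number of connected components of a subset of the plane. -/
def numCC (A : Set ℂ) : ℕ := Nat.card (ConnectedComponents ↥A)

/-- `τ(H) = Σ_{k=H_*+1}^{H*} (c_k(H) − 1)`. -/
def tau (H : ℂ → ℕ) : ℕ :=
  ∑ k ∈ Finset.Icc (minOnS1 H + 1) (maxOnS1 H), (numCC (superlevel H k) - 1)

/-- `ρ` for the degrees-of-freedom count. -/
def rho (m : ℂ) (r : ℝ) : ℕ :=
  if bTrace m r = ∅ then 3
  else if (bTrace m r).ncard = 1 ∨ (bTrace m r).ncard = 2 then 1
  else 0

/-- `N`-degrees of freedom of a decomposition with `n ≤ N` signals. -/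
def DoF (N : ℕ) {n : ℕ} (v : Fin n → ℂ × ℝ) : ℕ :=
  3 * (N - n) + ∑ i, rho (v i).1 (v i).2

open Filter Topology Set Complex Real

lemma ne_zero_of_mem_S1 {x : ℂ} (hx : x ∈ S1) : x ≠ 0 :=
  norm_ne_zero_iff.1 (by rw [hx]; exact one_ne_zero)

lemma rot_zero (x : ℂ) : rot 0 x = x := by simp [rot]

lemma rot_arg_div {x z : ℂ} (hx : x ∈ S1) (hz : z ∈ S1) : rot (arg (z / x)) x = z := by
  have hzx : ‖z / x‖ = 1 := by rw [norm_div, hz, hx, div_one]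
  have := norm_mul_exp_arg_mul_I (z / x)
  rw [hzx, ofReal_one, one_mul] at this
  rw [rot, this, div_mul_cancel₀ _ (ne_zero_of_mem_S1 hx)]

lemma arg_rot_div {x : ℂ} (hx : x ≠ 0) {t : ℝ} (ht : t ∈ Ioc (-π) π) :
    arg (rot t x / x) = t := by
  rw [rot, mul_div_cancel_right₀ _ hx, exp_mul_I, arg_cos_add_sin_mul_I ht]

lemma continuousAt_arg_div_rot {x : ℂ} (hx : x ≠ 0) {t : ℝ} (ht : t ∈ Ioo (-π) π) :
    ContinuousAt (fun z => arg (z / x)) (rot t x) := by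
  refine (continuousAt_arg ?_).comp (continuousAt_id.div_const x)
  show rot t x / x ∈ slitPlane
  rw [mem_slitPlane_iff_arg, arg_rot_div hx (Ioo_subset_Ioc_self ht)]
  exact ⟨ht.2.ne, div_ne_zero (by simp [rot, hx]) hx⟩

lemma analyticAt_normSq_rot_sub (x m : ℂ) (t : ℝ) :
    AnalyticAt ℝ (fun s : ℝ => normSq (rot s x - m)) t := by
  have hf : AnalyticAt ℂ (fun z : ℂ => cexp (z * I) * x - m) t := by fun_prop
  simp only [normSq_apply, rot]
  exact (hf.re_ofReal.mul hf.re_ofReal).add (hf.im_ofReal.mul hf.im_ofReal)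

theorem Filter.EventuallyConst.eventually_continuousAt {X β : Type*} [TopologicalSpace X]
    [TopologicalSpace β] {f : X → β} {s : Set X} {a : X} (hs : IsOpen s)
    (h : EventuallyConst f (𝓝[s] a)) : ∀ᶠ x in 𝓝[s] a, ContinuousAt f x := by
  have : Nonempty β := ⟨f a⟩
  obtain ⟨c, hc⟩ := h.eventuallyEq_const
  filter_upwards [eventually_eventually_nhdsWithin.2 hc, self_mem_nhdsWithin] with x hx hxs
  rw [hs.nhdsWithin_eq hxs] at hx
  exact continuousAt_const.congr (hx.mono fun _ h => h.symm)

theorem Filter.EventuallyConst.finset_sum {α ι β : Type*} [AddCommMonoid β] {l : Filter α}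
    {f : ι → α → β} (s : Finset ι) (h : ∀ i ∈ s, EventuallyConst (f i) l) :
    EventuallyConst (fun x => ∑ i ∈ s, f i x) l := by
  induction s using Finset.induction_on with
  | empty => simp [EventuallyConst.const]
  | insert i s hi ih =>
    simp_rw [Finset.sum_insert hi]
    exact (h i (Finset.mem_insert_self i s)).add (ih fun j hj => h j (Finset.mem_insert_of_mem hj))

lemma IsPreconnected.nonpos_iff_of_ne_zero {s : Set ℝ} (hs : IsPreconnected s) {g : ℝ → ℝ}
    (hg : ContinuousOn g s) (h0 : ∀ t ∈ s, g t ≠ 0) {a b : ℝ} (ha : a ∈ s) (hb : b ∈ s) :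
    g a ≤ 0 ↔ g b ≤ 0 := by
  suffices key : ∀ a ∈ s, ∀ b ∈ s, g a ≤ 0 → g b ≤ 0 from ⟨key a ha b hb, key b hb a ha⟩
  intro a ha b hb hga
  by_contra! hgb
  obtain ⟨c, hc, hc0⟩ := hs.intermediate_value ha hb hg ⟨hga, hgb.le⟩
  exact h0 c hc hc0

theorem AnalyticAt.eventuallyConst_nonpos {g : ℝ → ℝ} {a : ℝ} (hg : AnalyticAt ℝ g a)
    (hc : Continuous g) {l : Filter ℝ} {ι : Sort*} {p : ι → Prop} {S : ι → Set ℝ}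
    (hl : l.HasBasis p S) (hS : ∀ i, IsPreconnected (S i)) (hla : l ≤ 𝓝[≠] a) :
    EventuallyConst (fun t => g t ≤ 0) l := by
  rcases hg.eventually_eq_zero_or_eventually_ne_zero with hzero | hne
  · exact eventuallyConst_pred.2 <| .inl <|
      hla.trans nhdsWithin_le_nhds <| hzero.mono fun _ => le_of_eq
  · obtain ⟨i, hi, hSi⟩ := hl.eventually_iff.1 (hla hne)
    exact hl.eventuallyConst_iff.2 ⟨i, hi, fun s hs t ht =>
      propext <| (hS i).nonpos_iff_of_ne_zero hc.continuousOn (fun _ hu => hSi hu) hs ht⟩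

lemma signal_eq_ite_normSq_sub_sq_nonpos {r : ℝ} (hr : 0 ≤ r) (m z : ℂ) :
    signal m r z = if normSq (z - m) - r ^ 2 ≤ 0 then 1 else 0 := by
  simp_rw [signal, sub_nonpos, normSq_eq_norm_sq,
    pow_le_pow_iff_left₀ (norm_nonneg _) hr two_ne_zero]

lemma eventuallyConst_signal_rot {r : ℝ} (hr : 0 ≤ r) (m x : ℂ) {l : Filter ℝ}
    (hl : l = 𝓝[<] 0 ∨ l = 𝓝[>] 0) : EventuallyConst (fun t => signal m r (rot t x)) l := by
  have hg t : AnalyticAt ℝ (fun s => normSq (rot s x - m) - r ^ 2) t :=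
    (analyticAt_normSq_rot_sub x m t).sub analyticAt_const
  have hc := continuous_iff_continuousAt.2 fun t => (hg t).continuousAt
  have hsign : EventuallyConst (fun t => normSq (rot t x - m) - r ^ 2 ≤ 0) l := by
    rcases hl with rfl | rfl
    · exact (hg 0).eventuallyConst_nonpos hc (nhdsLT_basis 0) (fun _ => isPreconnected_Ioo)
        (nhdsLT_le_nhdsNE 0)
    · exact (hg 0).eventuallyConst_nonpos hc (nhdsGT_basis 0) (fun _ => isPreconnected_Ioo)
        (nhdsGT_le_nhdsNE 0)
  simp_rw [signal_eq_ite_normSq_sub_sq_nonpos hr]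
  exact hsign.comp fun p => if p then 1 else 0

lemma eventuallyConst_Hsum_rot {n : ℕ} (v : Fin n → ℂ × ℝ) (hr : ∀ i, 0 ≤ (v i).2) (x : ℂ)
    {l : Filter ℝ} (hl : l = 𝓝[<] 0 ∨ l = 𝓝[>] 0) :
    EventuallyConst (fun t => Hsum v (rot t x)) l :=
  .finset_sum _ fun i _ => eventuallyConst_signal_rot (hr i) _ x hl

lemma exists_rightVal_of_eventuallyConst {H : ℂ → ℕ} {x : ℂ}
    (h : EventuallyConst (fun t => H (rot t x)) (𝓝[>] 0)) : ∃ a, rightVal H x a := by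
  obtain ⟨a, ha⟩ := h.eventuallyEq_const
  obtain ⟨δ, hδ, hδa⟩ := (nhdsGT_basis (0 : ℝ)).eventually_iff.1 ha
  exact ⟨a, δ, hδ, fun t ht0 htδ => hδa ⟨ht0, htδ⟩⟩

lemma exists_leftVal_of_eventuallyConst {H : ℂ → ℕ} {x : ℂ}
    (h : EventuallyConst (fun t => H (rot t x)) (𝓝[<] 0)) : ∃ b, leftVal H x b := by
  obtain ⟨b, hb⟩ := h.eventuallyEq_const
  obtain ⟨c, hc, hcb⟩ := (nhdsLT_basis (0 : ℝ)).eventually_iff.1 hb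
  exact ⟨b, -c, neg_pos.2 hc, fun t hct ht0 => hcb ⟨by rwa [neg_neg] at hct, ht0⟩⟩

lemma continuousWithinAt_S1_of_continuousAt_rot {α : Type*} [TopologicalSpace α] {H : ℂ → α}
    {x : ℂ} (hx : x ∈ S1) {t : ℝ} (ht : t ∈ Ioo (-π) π)
    (h : ContinuousAt (fun s => H (rot s x)) t) : ContinuousWithinAt H S1 (rot t x) := by
  have hx0 := ne_zero_of_mem_S1 hx
  have hcomp : ContinuousAt (fun z => H (rot (arg (z / x)) x)) (rot t x) :=
    h.comp_of_eq (continuousAt_arg_div_rot hx0 ht) (arg_rot_div hx0 (Ioo_subset_Ioc_self ht))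
  refine hcomp.continuousWithinAt.congr (fun z hz => by rw [rot_arg_div hx hz]) ?_
  rw [arg_rot_div hx0 (Ioo_subset_Ioc_self ht)]

lemma eventually_continuousWithinAt_S1 {α : Type*} [TopologicalSpace α] {H : ℂ → α} {x : ℂ}
    (hx : x ∈ S1) (h : ∀ᶠ t in 𝓝[≠] 0, ContinuousAt (fun s => H (rot s x)) t) :
    ∀ᶠ z in 𝓝[≠] x, z ∈ S1 → ContinuousWithinAt H S1 z := by
  have hx0 := ne_zero_of_mem_S1 hx
  have hnear : ∀ᶠ t in 𝓝 0, t ≠ 0 → t ∈ Ioo (-π) π ∧ ContinuousAt (fun s => H (rot s x)) t := by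
    filter_upwards [eventually_nhdsWithin_iff.1 h, Ioo_mem_nhds (neg_neg_of_pos pi_pos) pi_pos]
      with t hct htπ ht0 using ⟨htπ, hct ht0⟩
  have harg : Tendsto (fun z => arg (z / x)) (𝓝 x) (𝓝 0) := by
    simpa [rot_zero, arg_rot_div hx0 ⟨neg_lt_zero.2 pi_pos, pi_pos.le⟩] using
      (continuousAt_arg_div_rot hx0 ⟨neg_lt_zero.2 pi_pos, pi_pos⟩ (t := 0)).tendsto
  filter_upwards [nhdsWithin_le_nhds (harg.eventually hnear), self_mem_nhdsWithin]
    with z hz hzx hzS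
  have hrz := rot_arg_div hx hzS
  have harg0 : arg (z / x) ≠ 0 := fun h0 => hzx (by rw [← hrz, h0, rot_zero]; rfl)
  obtain ⟨hπ, hcont⟩ := hz harg0
  rw [← hrz]
  exact continuousWithinAt_S1_of_continuousAt_rot hx hπ hcont

lemma finite_discontinuities_S1 {α : Type*} [TopologicalSpace α] {H : ℂ → α}
    (h : ∀ x ∈ S1, ∀ᶠ t in 𝓝[≠] 0, ContinuousAt (fun s => H (rot s x)) t) :
    {x ∈ S1 | ¬ ContinuousWithinAt H S1 x}.Finite := by
  have hS1 : IsCompact S1 := by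
    have : S1 = Metric.sphere 0 1 := by ext; simp [S1]
    exact this ▸ isCompact_sphere 0 1
  refine hS1.finite_sdiff_of_mem_codiscreteWithin (s := {z | ContinuousWithinAt H S1 z}) ?_
  refine mem_codiscreteWithin_iff_forall_mem_nhdsNE.2 fun x hx => ?_
  filter_upwards [eventually_continuousWithinAt_S1 hx (h x hx)] with z hz
  by_cases hzS : z ∈ S1
  exacts [Or.inl (hz hzS), Or.inr hzS]

/-- the sum of signal functions is constant on small one-sided arcs
around every point of `S¹`, and has only finitely many discontinuity points on `S¹`. -/
theorem stmt1 {n : ℕ} (v : Fin n → ℂ × ℝ) (hr : ∀ i, 0 < (v i).2) :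
    (∀ x ∈ S1, (∃ a : ℕ, rightVal (Hsum v) x a) ∧ (∃ b : ℕ, leftVal (Hsum v) x b)) ∧
    {x ∈ S1 | ¬ ContinuousWithinAt (Hsum v) S1 x}.Finite := by
  have hleft x := eventuallyConst_Hsum_rot v (fun i => (hr i).le) x (.inl rfl)
  have hright x := eventuallyConst_Hsum_rot v (fun i => (hr i).le) x (.inr rfl)
  refine ⟨fun x _ => ⟨exists_rightVal_of_eventuallyConst (hright x),
    exists_leftVal_of_eventuallyConst (hleft x)⟩, finite_discontinuities_S1 fun x _ => ?_⟩
  rw [← nhdsLT_sup_nhdsGT, eventually_sup]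
  exact ⟨(hleft x).eventually_continuousAt isOpen_Iio,
    (hright x).eventually_continuousAt isOpen_Ioi⟩
end
end

section
/- Let (m_1,r_1),…,(m_n,r_n) with m_i ∈ ℝ², r_i > 0, and let H_v : S¹ → ℕ be the sum of the signal functions. A point x ∈ S¹ is a discontinuity point of H_v (with respect to the subspace topology of S¹) if and only if there exists an index i such that x ∈ ∂h_{(m_i,r_i)} and S¹ is not contained in the closed disk {y ∈ ℝ² : ‖y − m_i‖ ≤ r_i}. -/
noncomputable section

open scoped BigOperators
open Classical

/-!
For `y ∈ S¹` we have `‖y - m‖² = 1 + ‖m‖² - 2 Re (y m̄)`, so the distance to `m` is large exactly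
where `Re (y m̄)` is small. Rotating `x` by `e^{it}` turns a local minimum of `Re (y m̄)` on `S¹`
at `x` into a local minimum of `t ↦ Re (e^{it} x m̄)` at `0`; Fermat's rule and `cos t < 1` then
force `x m̄ = -‖m‖`, a global minimum. Hence a closed disk whose boundary passes through `x ∈ S¹`
contains a neighbourhood of `x` in `S¹` only if it contains all of `S¹`.

Each signal is upper semicontinuous, so the `ℕ`-valued sum `H_v` is locally constant at `x`
exactly when every summand is.
-/

open Filter Topology ComplexConjugate

theorem continuousWithinAt_iff_eventually_eq {X Y : Type*} [TopologicalSpace X]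
    [TopologicalSpace Y] [DiscreteTopology Y] {f : X → Y} {s : Set X} {x : X} :
    ContinuousWithinAt f s x ↔ ∀ᶠ y in 𝓝[s] x, f y = f x := by
  rw [ContinuousWithinAt, nhds_discrete, tendsto_pure]

theorem Finset.eventually_sum_eq_iff_of_eventually_le {ι α M : Type*} [AddCommMonoid M]
    [PartialOrder M] [IsOrderedCancelAddMonoid M] {s : Finset ι} {f : ι → α → M} {c : ι → M}
    {l : Filter α} (h : ∀ i ∈ s, ∀ᶠ y in l, f i y ≤ c i) :
    (∀ᶠ y in l, ∑ i ∈ s, f i y = ∑ i ∈ s, c i) ↔ ∀ i ∈ s, ∀ᶠ y in l, f i y = c i := by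
  rw [← eventually_all_finset]
  constructor
  · intro hsum
    filter_upwards [hsum, (eventually_all_finset s).2 h] with y hy hle
    exact (sum_eq_sum_iff_of_le hle).1 hy
  · intro heq
    filter_upwards [heq] with y hy
    exact sum_congr rfl hy

theorem Complex.re_eq_neg_norm_of_isLocalMin {w : ℂ}
    (h : IsLocalMin (fun t : ℝ => (exp (t * I) * w).re) 0) : w.re = -‖w‖ := by
  have hg : (fun t : ℝ => (exp (t * I) * w).re) =
      fun t => Real.cos t * w.re - Real.sin t * w.im := by
    ext t
    simp [mul_re, exp_ofReal_mul_I_re, exp_ofReal_mul_I_im]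
  rw [hg] at h
  have hderiv : HasDerivAt (fun t => Real.cos t * w.re - Real.sin t * w.im) (-w.im) 0 := by
    simpa using ((Real.hasDerivAt_cos 0).mul_const w.re).fun_sub
      ((Real.hasDerivAt_sin 0).mul_const w.im)
  have him : w.im = 0 := neg_eq_zero.1 (h.hasDerivAt_eq_zero hderiv)
  have hre : w.re ≤ 0 := by
    by_contra! hpos
    obtain ⟨t, hmin, ht0, ht1⟩ :=
      ((h.filter_mono nhdsWithin_le_nhds).and (Ioo_mem_nhdsGT one_pos)).exists
    have hcos : Real.cos t < 1 := by
      simpa using Real.cos_lt_cos_of_nonneg_of_le_pi le_rfl (by linarith [Real.pi_gt_three]) ht0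
    simp only [him, Real.cos_zero, Real.sin_zero] at hmin
    nlinarith
  rw [← abs_re_eq_norm.2 him, abs_of_nonpos hre, neg_neg]

theorem rot_mem_S1 {x : ℂ} (hx : x ∈ S1) (t : ℝ) : rot t x ∈ S1 := by
  simpa [S1, rot, Complex.norm_exp_ofReal_mul_I] using hx

theorem tendsto_rot_nhdsWithin_S1 {x : ℂ} (hx : x ∈ S1) :
    Tendsto (fun t : ℝ => rot t x) (𝓝 0) (𝓝[S1] x) := by
  refine tendsto_nhdsWithin_iff.2 ⟨?_, Eventually.of_forall (rot_mem_S1 hx)⟩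
  have : Continuous fun t : ℝ => rot t x := by unfold rot; fun_prop
  simpa [rot] using this.tendsto 0

theorem norm_sub_sq_of_mem_S1 {y : ℂ} (hy : y ∈ S1) (m : ℂ) :
    ‖y - m‖ ^ 2 = 1 + ‖m‖ ^ 2 - 2 * (y * conj m).re := by
  rw [← Complex.normSq_eq_norm_sq, Complex.normSq_sub, Complex.normSq_eq_norm_sq,
    Complex.normSq_eq_norm_sq, show ‖y‖ = 1 from hy, one_pow]

theorem norm_sub_le_norm_sub_iff {x y : ℂ} (hx : x ∈ S1) (hy : y ∈ S1) (m : ℂ) :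
    ‖y - m‖ ≤ ‖x - m‖ ↔ (x * conj m).re ≤ (y * conj m).re := by
  rw [← sq_le_sq₀ (norm_nonneg _) (norm_nonneg _), norm_sub_sq_of_mem_S1 hx,
    norm_sub_sq_of_mem_S1 hy]
  constructor <;> intro h <;> linarith

theorem isMinOn_re_mul_conj_of_isLocalMinOn {x : ℂ} (hx : x ∈ S1) (m : ℂ)
    (h : IsLocalMinOn (fun y => (y * conj m).re) S1 x) :
    IsMinOn (fun y => (y * conj m).re) S1 x := by
  have hrot : IsLocalMin (fun t : ℝ => (Complex.exp (t * Complex.I) * (x * conj m)).re) 0 := by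
    have h0 : rot 0 x = x := by simp [rot]
    have := IsMinFilter.comp_tendsto (g := fun t : ℝ => rot t x) (b := 0) (by rw [h0]; exact h)
      (tendsto_rot_nhdsWithin_S1 hx)
    simpa only [IsLocalMin, Function.comp_def, rot, mul_assoc] using this
  have hmin := Complex.re_eq_neg_norm_of_isLocalMin hrot
  intro y hy
  have hnorm : ‖y * conj m‖ = ‖x * conj m‖ := by
    simp [show ‖y‖ = 1 from hy, show ‖x‖ = 1 from hx]
  have hre := (abs_le.1 (Complex.abs_re_le_norm (y * conj m))).1
  show (x * conj m).re ≤ (y * conj m).re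
  linarith

theorem isMaxOn_norm_sub_of_isLocalMaxOn {x : ℂ} (hx : x ∈ S1) (m : ℂ)
    (h : IsLocalMaxOn (fun y => ‖y - m‖) S1 x) :
    IsMaxOn (fun y => ‖y - m‖) S1 x := by
  have hmin : IsLocalMinOn (fun y => (y * conj m).re) S1 x := by
    filter_upwards [h, self_mem_nhdsWithin] with y hy hyS
    exact (norm_sub_le_norm_sub_iff hx hyS m).1 hy
  intro y hy
  exact (norm_sub_le_norm_sub_iff hx hy m).2 (isMinOn_re_mul_conj_of_isLocalMinOn hx m hmin hy)

section Signal

variable {m x : ℂ} {r : ℝ}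

theorem eventually_signal_le : ∀ᶠ y in 𝓝 x, signal m r y ≤ signal m r x := by
  by_cases hx : ‖x - m‖ ≤ r
  · refine Eventually.of_forall fun y => ?_
    unfold signal
    split_ifs <;> omega
  · have hcont : Continuous fun y : ℂ => ‖y - m‖ := (continuous_sub_right m).norm
    filter_upwards [continuousAt_const.eventually_lt hcont.continuousAt (not_le.1 hx)] with y hy
    simp [signal, not_le.2 hy]

theorem eventually_signal_eq_iff {s : Set ℂ} :
    (∀ᶠ y in 𝓝[s] x, signal m r y = signal m r x) ↔
      (‖x - m‖ ≤ r → ∀ᶠ y in 𝓝[s] x, ‖y - m‖ ≤ r) := by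
  by_cases hx : ‖x - m‖ ≤ r
  · simp [signal, hx]
  · have hcont : Continuous fun y : ℂ => ‖y - m‖ := (continuous_sub_right m).norm
    simp only [hx, false_implies, iff_true]
    filter_upwards [(continuousAt_const.eventually_lt hcont.continuousAt (not_le.1 hx)).filter_mono
      nhdsWithin_le_nhds] with y hy
    simp [signal, hx, not_le.2 hy]

theorem eventually_norm_sub_le_iff (hx : x ∈ S1) :
    (‖x - m‖ ≤ r → ∀ᶠ y in 𝓝[S1] x, ‖y - m‖ ≤ r) ↔
      (x ∈ bTrace m r → S1 ⊆ {y : ℂ | ‖y - m‖ ≤ r}) := by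
  have hcont : Continuous fun y : ℂ => ‖y - m‖ := (continuous_sub_right m).norm
  rcases lt_trichotomy ‖x - m‖ r with hlt | rfl | hgt
  · refine iff_of_true (fun _ => ?_) fun hb => absurd hb.2 hlt.ne
    filter_upwards [(hcont.continuousAt.eventually_lt continuousAt_const hlt).filter_mono
      nhdsWithin_le_nhds] with y hy using hy.le
  · simp only [le_rfl, true_implies, show x ∈ bTrace m ‖x - m‖ from ⟨hx, rfl⟩]
    exact ⟨isMaxOn_norm_sub_of_isLocalMaxOn hx m, IsMaxOn.localize⟩
  · exact iff_of_true (fun h => absurd h (not_le.2 hgt)) fun hb => absurd hb.2 hgt.ne'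

end Signal

theorem stmt2_general {n : ℕ} (v : Fin n → ℂ × ℝ)
    (x : ℂ) (hx : x ∈ S1) :
    ¬ ContinuousWithinAt (Hsum v) S1 x ↔
      ∃ i : Fin n, x ∈ bTrace (v i).1 (v i).2 ∧
        ¬ S1 ⊆ {y : ℂ | ‖y - (v i).1‖ ≤ (v i).2} := by
  simp only [continuousWithinAt_iff_eventually_eq, Hsum]
  rw [Finset.eventually_sum_eq_iff_of_eventually_le
    fun i _ => eventually_signal_le.filter_mono nhdsWithin_le_nhds]
  simp only [Finset.mem_univ, true_implies, eventually_signal_eq_iff,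
    eventually_norm_sub_le_iff hx, not_forall, exists_prop]

/-- `x ∈ S¹` is a discontinuity point of `H_v` (for the subspace topology
of `S¹`) iff `x` lies on the boundary trace of some signal whose closed disk does not
contain all of `S¹`. -/
theorem stmt2 {n : ℕ} (v : Fin n → ℂ × ℝ) (hr : ∀ i, 0 < (v i).2)
    (x : ℂ) (hx : x ∈ S1) :
    ¬ ContinuousWithinAt (Hsum v) S1 x ↔
      ∃ i : Fin n, x ∈ bTrace (v i).1 (v i).2 ∧
        ¬ S1 ⊆ {y : ℂ | ‖y - (v i).1‖ ≤ (v i).2} :=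
  stmt2_general v x hx
end
end

section
/- Let m ∈ ℝ² and r > 0 be such that the boundary trace ∂h_{(m,r)} has exactly 0 or exactly 2 elements. Then there exists ε̄ > 0 such that for every (m',r') ∈ ℝ² × ℝ with ‖(m',r') − (m,r)‖ < ε̄ (Euclidean norm on ℝ³), the boundary trace ∂h_{(m',r')} has the same number of elements as ∂h_{(m,r)}. -/
noncomputable section

open scoped BigOperators
open Classical

/-!
For `x ∈ S¹`, expanding `‖x - m‖² = r²` turns the boundary trace into the intersection of `S¹`
with the line `Re (x m̄) = c`, where `c = (1 + ‖m‖² - r²) / 2`. Multiplying by `m̄` maps `S¹` onto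
the circle of radius `‖m‖`, so the trace is empty when `c² > ‖m‖²` and consists of the two points
`(c ± i √(‖m‖² - c²)) / m̄` when `c² < ‖m‖²`; when `c² = ‖m‖²` it is a single point or, for
`m = 0` and `r = 1`, all of `S¹`. Exactly zero or exactly two points therefore means that
the continuous discriminant `‖m‖² - c²` is negative or positive, and that sign survives small
perturbations of `(m, r)`.
-/

open Complex ComplexConjugate Filter Topology

namespace bTrace

def offset (m : ℂ) (r : ℝ) : ℝ := (1 + ‖m‖ ^ 2 - r ^ 2) / 2

def disc (m : ℂ) (r : ℝ) : ℝ := ‖m‖ ^ 2 - offset m r ^ 2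

def point (m : ℂ) (r e : ℝ) : ℂ := (offset m r + e * I) / conj m

variable {m x : ℂ} {r e : ℝ}

lemma continuous_disc : Continuous fun p : ℂ × ℝ => disc p.1 p.2 := by
  unfold disc offset
  fun_prop

lemma re_mul_conj_eq_offset (hx : x ∈ bTrace m r) : (x * conj m).re = offset m r := by
  obtain ⟨hx, hxm⟩ := hx
  have h := normSq_sub x m
  simp only [normSq_eq_norm_sq, hx, hxm] at h
  unfold offset
  linarith

lemma mem_of_re_mul_conj_eq_offset (hr : 0 ≤ r) (hx : ‖x‖ = 1)
    (h : (x * conj m).re = offset m r) : x ∈ bTrace m r := by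
  refine ⟨hx, (pow_left_inj₀ (norm_nonneg _) hr two_ne_zero).mp ?_⟩
  have h' := normSq_sub x m
  simp only [normSq_eq_norm_sq, hx, h, offset] at h'
  linarith

lemma norm_mul_conj_of_mem (hx : x ∈ bTrace m r) : ‖x * conj m‖ = ‖m‖ := by
  rw [norm_mul, hx.1, norm_conj, one_mul]

lemma offset_sq_le_of_mem (hx : x ∈ bTrace m r) : offset m r ^ 2 ≤ ‖m‖ ^ 2 := by
  rw [← re_mul_conj_eq_offset hx, ← norm_mul_conj_of_mem hx]
  exact sq_le_sq.mpr ((abs_re_le_norm _).trans (le_abs_self _))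

lemma im_mul_conj_sq_of_mem (hx : x ∈ bTrace m r) : (x * conj m).im ^ 2 = disc m r := by
  have h := normSq_apply (x * conj m)
  rw [normSq_eq_norm_sq, norm_mul_conj_of_mem hx, re_mul_conj_eq_offset hx] at h
  rw [disc, h]
  ring

lemma eq_empty_of_disc_neg (hd : disc m r < 0) : bTrace m r = ∅ :=
  Set.eq_empty_of_forall_notMem fun _ hx => by
    have := offset_sq_le_of_mem hx
    rw [disc] at hd
    linarith

lemma eq_one_of_disc_zero_nonneg (hr : 0 ≤ r) (hd : 0 ≤ disc 0 r) : r = 1 := by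
  simp only [disc, offset, norm_zero] at hd
  exact (pow_eq_one_iff_of_nonneg hr two_ne_zero).mp (by nlinarith)

lemma ncard_zero_one_ne_two : (bTrace 0 1).ncard ≠ 2 := by
  have hsub : ({1, -1, I} : Set ℂ) ⊆ bTrace 0 1 := by
    rintro x (rfl | rfl | rfl) <;> simp [bTrace]
  have h3 : ({1, -1, I} : Set ℂ).ncard = 3 :=
    Set.ncard_eq_three.mpr ⟨1, -1, I, by norm_num, by simp [Complex.ext_iff],
      by simp [Complex.ext_iff], rfl⟩
  by_cases hfin : (bTrace 0 1).Finite
  · have := Set.ncard_le_ncard hsub hfin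
    omega
  · simp [Set.Infinite.ncard hfin]

lemma point_mul_conj (hm : m ≠ 0) : point m r e * conj m = offset m r + e * I :=
  div_mul_cancel₀ _ ((map_ne_zero _).mpr hm)

lemma point_mem (hm : m ≠ 0) (hr : 0 ≤ r) (he : e ^ 2 = disc m r) :
    point m r e ∈ bTrace m r := by
  refine mem_of_re_mul_conj_eq_offset hr ?_ (by simp [point_mul_conj hm])
  have hnorm : ‖(offset m r : ℂ) + e * I‖ = ‖m‖ := by
    refine (pow_left_inj₀ (norm_nonneg _) (norm_nonneg _) two_ne_zero).mp ?_
    rw [← normSq_eq_norm_sq, normSq_add_mul_I, he, disc]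
    ring
  rw [point, norm_div, norm_conj, hnorm, div_self (norm_ne_zero_iff.mpr hm)]

lemma eq_point_of_mem (hm : m ≠ 0) (hx : x ∈ bTrace m r) :
    x = point m r (x * conj m).im := by
  rw [point, ← re_mul_conj_eq_offset hx, re_add_im,
    mul_div_cancel_right₀ _ ((map_ne_zero _).mpr hm)]

lemma eq_pair (hm : m ≠ 0) (hr : 0 ≤ r) (hd : 0 ≤ disc m r) :
    bTrace m r = {point m r √(disc m r), point m r (-√(disc m r))} := by
  ext x
  constructor
  · intro hx
    rw [eq_point_of_mem hm hx]
    rcases sq_eq_sq_iff_eq_or_eq_neg.mp ((im_mul_conj_sq_of_mem hx).trans (Real.sq_sqrt hd).symm)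
      with h | h <;> simp [h]
  · rintro (rfl | rfl) <;> exact point_mem hm hr (by simp [hd])

lemma disc_neg_of_eq_empty (hr : 0 ≤ r) (h : bTrace m r = ∅) : disc m r < 0 := by
  by_contra! hd
  rcases eq_or_ne m 0 with rfl | hm
  · obtain rfl := eq_one_of_disc_zero_nonneg hr hd
    exact h.subset (by simp [bTrace] : (1 : ℂ) ∈ bTrace 0 1)
  · exact h.subset (point_mem hm hr (Real.sq_sqrt hd))

lemma disc_pos_of_ncard_eq_two (hr : 0 ≤ r) (h : (bTrace m r).ncard = 2) : 0 < disc m r := by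
  by_contra! hd
  rcases hd.lt_or_eq with hd | hd
  · simp [eq_empty_of_disc_neg hd] at h
  rcases eq_or_ne m 0 with rfl | hm
  · obtain rfl := eq_one_of_disc_zero_nonneg hr hd.ge
    exact ncard_zero_one_ne_two h
  · rw [eq_pair hm hr hd.ge, hd, Real.sqrt_zero, neg_zero, Set.pair_eq_singleton,
      Set.ncard_singleton] at h
    omega

lemma finite_and_ncard_eq_two_of_disc_pos (hr : 0 ≤ r) (hd : 0 < disc m r) :
    (bTrace m r).Finite ∧ (bTrace m r).ncard = 2 := by
  have hm : m ≠ 0 := by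
    rintro rfl
    simp only [disc, norm_zero] at hd
    nlinarith
  rw [eq_pair hm hr hd.le]
  refine ⟨Set.toFinite _, Set.ncard_pair fun h => ?_⟩
  have := congrArg (fun z => (z * conj m).im) h
  simp only [point_mul_conj hm, add_im, ofReal_im, mul_im, ofReal_re, I_re, I_im] at this
  linarith [Real.sqrt_pos.mpr hd]

end bTrace

lemma Prod.dist_le_sqrt {α β : Type*} [PseudoMetricSpace α] [PseudoMetricSpace β]
    (p q : α × β) : dist p q ≤ √(dist p.1 q.1 ^ 2 + dist p.2 q.2 ^ 2) := by
  rw [Prod.dist_eq]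
  exact max_le (Real.le_sqrt_of_sq_le (by nlinarith)) (Real.le_sqrt_of_sq_le (by nlinarith))

/-- if `∂h_{(m,r)}` has exactly 0 or exactly 2 elements, then all
sufficiently small perturbations of `(m,r)` (in the Euclidean norm on `ℝ³`) leave
the number of elements of the boundary trace unchanged. -/
theorem stmt3 (m : ℂ) (r : ℝ) (hr : 0 < r)
    (h : bTrace m r = ∅ ∨ (bTrace m r).ncard = 2) :
    ∃ ε > (0 : ℝ), ∀ m' : ℂ, ∀ r' : ℝ,
      Real.sqrt (‖m' - m‖ ^ 2 + (r' - r) ^ 2) < ε →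
      (bTrace m' r').Finite ∧ (bTrace m' r').ncard = (bTrace m r).ncard := by
  suffices ∀ᶠ p : ℂ × ℝ in 𝓝 (m, r),
      (bTrace p.1 p.2).Finite ∧ (bTrace p.1 p.2).ncard = (bTrace m r).ncard by
    obtain ⟨ε, hε, hball⟩ := Metric.eventually_nhds_iff.mp this
    refine ⟨ε, hε, fun m' r' hlt => hball (y := (m', r')) ?_⟩
    refine (Prod.dist_le_sqrt _ _).trans_lt ?_
    simpa [dist_eq_norm, Real.dist_eq, sq_abs] using hlt
  have hdisc := bTrace.continuous_disc.tendsto (m, r)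
  rcases h with he | h2
  · filter_upwards [hdisc.eventually (gt_mem_nhds (bTrace.disc_neg_of_eq_empty hr.le he))]
      with p hp
    simp [bTrace.eq_empty_of_disc_neg hp, he]
  · filter_upwards [hdisc.eventually (lt_mem_nhds (bTrace.disc_pos_of_ncard_eq_two hr.le h2)),
      (continuous_snd.tendsto (m, r)).eventually (lt_mem_nhds hr)] with p hp hpr
    rw [h2]
    exact bTrace.finite_and_ncard_eq_two_of_disc_pos hpr.le hp
end
end

section
/- Let m ∈ ℝ² and r > 0 be such that the boundary trace ∂h_{(m,r)} has exactly one element or is infinite. Then for every ε̄ > 0 and every k ∈ {0,1,2} there exists (m',r') ∈ ℝ² × ℝ with 0 < ‖(m',r') − (m,r)‖ < ε̄ (Euclidean norm on ℝ³) such that the boundary trace ∂h_{(m',r')} has exactly k elements. -/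
noncomputable section

open scoped BigOperators
open Classical

/-!
On `S¹` the condition `‖x - m‖ = r` is linear: `⟪x, m⟫ = c` with `c = (1 + ‖m‖² - r²) / 2`.
Hence the trace has no point if `‖m‖ < |c|`, one point if `|c| = ‖m‖ ≠ 0`, two points if
`|c| < ‖m‖`, and is all of `S¹` if `m = 0`, `r = 1`. The hypothesis therefore says `|c| = ‖m‖`,
i.e. `r = |‖m‖ - 1|` or `r = ‖m‖ + 1`. Changing `r` slightly in one direction gives `‖m‖ < |c|`.
Moving `m` outwards by `s` along its ray and `r` to `|‖m‖ + s - 1|` resp. `‖m‖ + s + 1` keeps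
`|c| = ‖m‖ ≠ 0`. Two points come from changing `r` in the other direction when `c = ‖m‖ ≠ 0`,
and from moving `m` outwards when `c = -‖m‖`.
-/

open scoped ComplexConjugate

/-- The radical axis of `S¹` and the circle of centre `m` and radius `r` is the line
`⟪x, m⟫ = radicalOffset ‖m‖ r`. -/
def radicalOffset (d r : ℝ) : ℝ := (1 + d ^ 2 - r ^ 2) / 2

def paramDist (m : ℂ) (r : ℝ) (m' : ℂ) (r' : ℝ) : ℝ := √(‖m' - m‖ ^ 2 + (r' - r) ^ 2)

theorem mem_bTrace_iff {m : ℂ} {r : ℝ} (hr : 0 ≤ r) {x : ℂ} :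
    x ∈ bTrace m r ↔ ‖x‖ = 1 ∧ inner ℝ x m = radicalOffset ‖m‖ r := by
  simp only [bTrace, Set.mem_ofPred_eq, radicalOffset]
  refine and_congr_right fun hx => ?_
  rw [← sq_eq_sq₀ (norm_nonneg _) hr, norm_sub_sq_real, hx]
  constructor <;> intro h <;> linarith

theorem bTrace_eq_empty_of_norm_lt {m : ℂ} {r : ℝ} (h : ‖m‖ < |radicalOffset ‖m‖ r|) :
    bTrace m r = ∅ := by
  refine Set.eq_empty_of_forall_notMem fun x hx => ?_
  obtain ⟨hx1, hxm⟩ := (mem_bTrace_iff (hx.2 ▸ norm_nonneg _)).1 hx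
  have := abs_real_inner_le_norm x m
  rw [hxm, hx1, one_mul] at this
  linarith

theorem bTrace_mul_right {u : ℂ} (hu : ‖u‖ = 1) (m : ℂ) (r : ℝ) :
    bTrace (m * u) r = (· * u) '' bTrace m r := by
  have hcu : conj u * u = 1 := by rw [Complex.conj_mul', hu]; simp
  have hinv : Function.LeftInverse (· * conj u) (· * u) := fun x => by
    simp only [mul_assoc, mul_comm u, hcu, mul_one]
  have hinv' : Function.RightInverse (· * conj u) (· * u) := fun x => by
    simp only [mul_assoc, hcu, mul_one]
  rw [Set.image_eq_preimage_of_inverse hinv hinv']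
  ext x
  have hsub : x * conj u - m = (x - m * u) * conj u := by linear_combination m * hcu
  simp only [bTrace, Set.mem_ofPred_eq, Set.mem_preimage, hsub, norm_mul, Complex.norm_conj, hu,
    mul_one]

theorem bTrace_ofReal {d r : ℝ} (hd : 0 < d) (hr : 0 ≤ r) :
    bTrace d r = {y : ℂ | ‖y‖ = 1 ∧ y.re = radicalOffset d r / d} := by
  ext x
  rw [mem_bTrace_iff hr, Complex.norm_real, Real.norm_of_nonneg hd.le, Set.mem_ofPred_eq,
    eq_div_iff hd.ne']
  simp [Complex.inner, mul_comm]

theorem setOf_norm_eq_one_re_eq (a : ℝ) :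
    {y : ℂ | ‖y‖ = 1 ∧ y.re = a} = {y : ℂ | y.re = a ∧ y.im ^ 2 = 1 - a ^ 2} := by
  ext y
  simp only [Set.mem_ofPred_eq]
  rw [← sq_eq_sq₀ (norm_nonneg _) zero_le_one, Complex.sq_norm, Complex.normSq_apply]
  constructor
  · rintro ⟨h, rfl⟩
    exact ⟨rfl, by linarith⟩
  · rintro ⟨rfl, h⟩
    exact ⟨by linarith, rfl⟩

theorem setOf_norm_eq_one_re_eq_of_abs_eq_one {a : ℝ} (ha : |a| = 1) :
    {y : ℂ | ‖y‖ = 1 ∧ y.re = a} = {(a : ℂ)} := by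
  have ha2 : a ^ 2 = 1 := by rw [← sq_abs, ha, one_pow]
  ext y
  simp only [setOf_norm_eq_one_re_eq, ha2, sub_self, Set.mem_ofPred_eq, Set.mem_singleton_iff,
    pow_eq_zero_iff two_ne_zero, Complex.ext_iff, Complex.ofReal_re, Complex.ofReal_im]

theorem setOf_norm_eq_one_re_eq_of_abs_lt_one {a : ℝ} (ha : |a| < 1) :
    {y : ℂ | ‖y‖ = 1 ∧ y.re = a}.Finite ∧ {y : ℂ | ‖y‖ = 1 ∧ y.re = a}.ncard = 2 := by
  set b := √(1 - a ^ 2)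
  have hb : 0 < b := Real.sqrt_pos.2 (by nlinarith [sq_abs a, abs_nonneg a])
  have hb2 : b ^ 2 = 1 - a ^ 2 := Real.sq_sqrt (by nlinarith [sq_abs a, abs_nonneg a])
  have hpair : {y : ℂ | ‖y‖ = 1 ∧ y.re = a} = {⟨a, b⟩, ⟨a, -b⟩} := by
    ext ⟨x, y⟩
    simp only [setOf_norm_eq_one_re_eq, ← hb2, sq_eq_sq_iff_eq_or_eq_neg, Set.mem_ofPred_eq,
      Set.mem_insert_iff, Set.mem_singleton_iff, Complex.mk.injEq]
    tauto
  rw [hpair]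
  refine ⟨Set.toFinite _, Set.ncard_pair fun h => ?_⟩
  simp only [Complex.mk.injEq, true_and] at h
  linarith

theorem bTrace_finite_and_ncard_eq_one {u : ℂ} (hu : ‖u‖ = 1) {d r : ℝ} (hd : 0 < d)
    (hr : 0 ≤ r) (hc : |radicalOffset d r| = d) :
    (bTrace (d * u) r).Finite ∧ (bTrace (d * u) r).ncard = 1 := by
  have ha : |radicalOffset d r / d| = 1 := by rw [abs_div, hc, abs_of_pos hd, div_self hd.ne']
  rw [bTrace_mul_right hu, bTrace_ofReal hd hr, setOf_norm_eq_one_re_eq_of_abs_eq_one ha,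
    Set.image_singleton]
  exact ⟨Set.finite_singleton _, Set.ncard_singleton _⟩

theorem bTrace_finite_and_ncard_eq_two {u : ℂ} (hu : ‖u‖ = 1) {d r : ℝ} (hd : 0 < d)
    (hr : 0 ≤ r) (hc : |radicalOffset d r| < d) :
    (bTrace (d * u) r).Finite ∧ (bTrace (d * u) r).ncard = 2 := by
  have ha : |radicalOffset d r / d| < 1 := by rwa [abs_div, abs_of_pos hd, div_lt_one hd]
  obtain ⟨hfin, hcard⟩ := setOf_norm_eq_one_re_eq_of_abs_lt_one ha
  have hinj : Function.Injective (· * u) := mul_left_injective₀ (by rintro rfl; simp at hu)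
  rw [bTrace_mul_right hu, bTrace_ofReal hd hr]
  exact ⟨hfin.image _, (Set.ncard_image_of_injective _ hinj).trans hcard⟩

theorem exists_norm_eq_one_ofReal_norm_mul_eq (m : ℂ) : ∃ u : ℂ, ‖u‖ = 1 ∧ (‖m‖ : ℂ) * u = m :=
  ⟨_, Complex.norm_exp_ofReal_mul_I _, Complex.norm_mul_exp_arg_mul_I m⟩

theorem abs_radicalOffset_eq_of_ncard_eq_one_or_infinite {m : ℂ} {r : ℝ} (hr : 0 ≤ r)
    (h : (bTrace m r).ncard = 1 ∨ (bTrace m r).Infinite) : |radicalOffset ‖m‖ r| = ‖m‖ := by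
  rcases lt_trichotomy |radicalOffset ‖m‖ r| ‖m‖ with hlt | heq | hgt
  · obtain ⟨u, hu, hm⟩ := exists_norm_eq_one_ofReal_norm_mul_eq m
    obtain ⟨hfin, hcard⟩ :=
      hm ▸ bTrace_finite_and_ncard_eq_two hu ((abs_nonneg _).trans_lt hlt) hr hlt
    rcases h with h | h
    · omega
    · exact absurd hfin h
  · exact heq
  · simp [bTrace_eq_empty_of_norm_lt hgt] at h

theorem radicalOffset_eq_self_iff {d r : ℝ} (hr : 0 ≤ r) :
    radicalOffset d r = d ↔ r = |d - 1| := by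
  rw [← sq_eq_sq₀ hr (abs_nonneg _), sq_abs, radicalOffset]
  constructor <;> intro h
  · linear_combination (-2) * h
  · linear_combination (-1 / 2) * h

theorem radicalOffset_eq_neg_self_iff {d r : ℝ} (hd : 0 ≤ d) (hr : 0 ≤ r) :
    radicalOffset d r = -d ↔ r = d + 1 := by
  rw [← sq_eq_sq₀ hr (by linarith), radicalOffset]
  constructor <;> intro h
  · linear_combination (-2) * h
  · linear_combination (-1 / 2) * h

theorem exists_near_lt_abs_radicalOffset {d r ε : ℝ} (hr : 0 < r)
    (hc : |radicalOffset d r| = d) (hε : 0 < ε) :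
    ∃ r', 0 < |r' - r| ∧ |r' - r| < ε ∧ d < |radicalOffset d r'| := by
  set δ := min (ε / 2) r
  have hδ : 0 < δ := lt_min (half_pos hε) hr
  have hδε : δ < ε := (min_le_left _ _).trans_lt (half_lt_self hε)
  have hδr : δ ≤ r := min_le_right _ _
  suffices ∃ τ, |τ| = δ ∧ d < |radicalOffset d (r + τ)| by
    obtain ⟨τ, hτ, hlt⟩ := this
    exact ⟨r + τ, by rwa [add_sub_cancel_left, hτ], by rwa [add_sub_cancel_left, hτ], hlt⟩
  rcases (abs_eq ((abs_nonneg _).trans hc.le)).1 hc with hc | hc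
  · refine ⟨-δ, by rw [abs_neg, abs_of_pos hδ], lt_abs.2 (Or.inl ?_)⟩
    have : radicalOffset d (r + -δ) = d + δ * (r - δ / 2) := by
      unfold radicalOffset at hc ⊢; linear_combination hc
    nlinarith
  · refine ⟨δ, abs_of_pos hδ, lt_abs.2 (Or.inr ?_)⟩
    have : radicalOffset d (r + δ) = -d - δ * (r + δ / 2) := by
      unfold radicalOffset at hc ⊢; linear_combination hc
    nlinarith

theorem exists_abs_radicalOffset_add_eq {d r s : ℝ} (hd : 0 ≤ d) (hr : 0 ≤ r) (hs : 0 ≤ s)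
    (hc : |radicalOffset d r| = d) :
    ∃ r', 0 ≤ r' ∧ |r' - r| ≤ s ∧ |radicalOffset (d + s) r'| = d + s := by
  have hds : 0 ≤ d + s := by linarith
  rcases (abs_eq hd).1 hc with hc | hc
  · rw [radicalOffset_eq_self_iff hr] at hc
    refine ⟨|d + s - 1|, abs_nonneg _, ?_, ?_⟩
    · calc |(|d + s - 1|) - r| ≤ |d + s - 1 - (d - 1)| := hc ▸ abs_abs_sub_abs_le_abs_sub _ _
        _ = s := by rw [add_sub_right_comm, add_sub_cancel_left, abs_of_nonneg hs]
    · rw [(radicalOffset_eq_self_iff (abs_nonneg _)).2 rfl, abs_of_nonneg hds]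
  · rw [radicalOffset_eq_neg_self_iff hd hr] at hc
    refine ⟨d + s + 1, by linarith, ?_, ?_⟩
    · rw [hc, add_sub_add_right_eq_sub, add_sub_cancel_left, abs_of_nonneg hs]
    · rw [(radicalOffset_eq_neg_self_iff hds (by linarith)).2 rfl, abs_neg, abs_of_nonneg hds]

theorem exists_near_abs_radicalOffset_lt {d r ε : ℝ} (hd : 0 < d) (hr : 0 < r)
    (hc : radicalOffset d r = d) (hε : 0 < ε) :
    ∃ r', 0 ≤ r' ∧ 0 < |r' - r| ∧ |r' - r| < ε ∧ |radicalOffset d r'| < d := by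
  set δ := min (ε / 2) (min r (d / r))
  have hδ : 0 < δ := lt_min (half_pos hε) (lt_min hr (div_pos hd hr))
  have hδε : δ < ε := (min_le_left _ _).trans_lt (half_lt_self hε)
  have hδr : δ ≤ r := (min_le_right _ _).trans (min_le_left _ _)
  have hδd : δ * r ≤ d := (le_div_iff₀ hr).1 ((min_le_right _ _).trans (min_le_right _ _))
  have hval : radicalOffset d (r + δ) = d - δ * (r + δ / 2) := by
    unfold radicalOffset at hc ⊢; linear_combination hc
  refine ⟨r + δ, by linarith, ?_, ?_, ?_⟩
  · rwa [add_sub_cancel_left, abs_of_pos hδ]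
  · rwa [add_sub_cancel_left, abs_of_pos hδ]
  · rw [hval, abs_lt]
    constructor <;> nlinarith

theorem abs_radicalOffset_add_lt {d r s : ℝ} (hd : 0 ≤ d) (hc : radicalOffset d r = -d)
    (hs : 0 < s) (hs1 : s < 1) : |radicalOffset (d + s) r| < d + s := by
  have hval : radicalOffset (d + s) r = -d + s * d + s ^ 2 / 2 := by
    unfold radicalOffset at hc ⊢; linear_combination hc
  rw [hval, abs_lt]
  constructor <;> nlinarith

theorem paramDist_same_center (m : ℂ) (r r' : ℝ) : paramDist m r m r' = |r' - r| := by
  simp [paramDist, Real.sqrt_sq_eq_abs]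

theorem paramDist_ofReal_mul_add {u : ℂ} (hu : ‖u‖ = 1) (d s r r' : ℝ) (hs : 0 ≤ s) :
    paramDist (d * u) r ((d + s : ℝ) * u) r' = √(s ^ 2 + (r' - r) ^ 2) := by
  rw [paramDist, ← sub_mul, norm_mul, hu, mul_one, ← Complex.ofReal_sub, add_sub_cancel_left,
    Complex.norm_real, Real.norm_of_nonneg hs]

theorem exists_near_bTrace_eq_empty {m : ℂ} {r ε : ℝ} (hr : 0 < r)
    (hc : |radicalOffset ‖m‖ r| = ‖m‖) (hε : 0 < ε) :
    ∃ r', 0 < paramDist m r m r' ∧ paramDist m r m r' < ε ∧ bTrace m r' = ∅ := by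
  obtain ⟨r', h0, hε', hlt⟩ := exists_near_lt_abs_radicalOffset hr hc hε
  rw [← paramDist_same_center m] at h0 hε'
  exact ⟨r', h0, hε', bTrace_eq_empty_of_norm_lt hlt⟩

theorem exists_near_bTrace_finite_and_ncard_eq_one {m : ℂ} {r ε : ℝ} (hr : 0 ≤ r)
    (hc : |radicalOffset ‖m‖ r| = ‖m‖) (hε : 0 < ε) :
    ∃ m' r', 0 < paramDist m r m' r' ∧ paramDist m r m' r' < ε ∧
      (bTrace m' r').Finite ∧ (bTrace m' r').ncard = 1 := by
  obtain ⟨u, hu, hm⟩ := exists_norm_eq_one_ofReal_norm_mul_eq m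
  have hs : 0 < ε / 2 := half_pos hε
  obtain ⟨r', hr', hrr, hc'⟩ := exists_abs_radicalOffset_add_eq (norm_nonneg m) hr hs.le hc
  have hrr2 : (r' - r) ^ 2 ≤ (ε / 2) ^ 2 := by
    rw [← sq_abs]; exact pow_le_pow_left₀ (abs_nonneg _) hrr 2
  have hdist := paramDist_ofReal_mul_add hu ‖m‖ (ε / 2) r r' hs.le
  rw [hm] at hdist
  refine ⟨(‖m‖ + ε / 2 : ℝ) * u, r', ?_, ?_,
    bTrace_finite_and_ncard_eq_one hu (by positivity) hr' hc'⟩ <;> rw [hdist]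
  · positivity
  · rw [Real.sqrt_lt' hε]; nlinarith

theorem exists_near_bTrace_finite_and_ncard_eq_two {m : ℂ} {r ε : ℝ} (hr : 0 < r)
    (hc : |radicalOffset ‖m‖ r| = ‖m‖) (hε : 0 < ε) :
    ∃ m' r', 0 < paramDist m r m' r' ∧ paramDist m r m' r' < ε ∧
      (bTrace m' r').Finite ∧ (bTrace m' r').ncard = 2 := by
  obtain ⟨u, hu, hm⟩ := exists_norm_eq_one_ofReal_norm_mul_eq m
  by_cases hneg : radicalOffset ‖m‖ r = -‖m‖
  · set s := min (ε / 2) (1 / 2)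
    have hs : 0 < s := lt_min (half_pos hε) one_half_pos
    have hsε : s < ε := (min_le_left _ _).trans_lt (half_lt_self hε)
    have hs1 : s < 1 := (min_le_right _ _).trans_lt one_half_lt_one
    have hdist := paramDist_ofReal_mul_add hu ‖m‖ s r r hs.le
    rw [hm, sub_self, zero_pow two_ne_zero, add_zero, Real.sqrt_sq hs.le] at hdist
    refine ⟨(‖m‖ + s : ℝ) * u, r, ?_, ?_, bTrace_finite_and_ncard_eq_two hu (by positivity) hr.le
      (abs_radicalOffset_add_lt (norm_nonneg m) hneg hs hs1)⟩ <;> rwa [hdist]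
  · have hpos : radicalOffset ‖m‖ r = ‖m‖ := ((abs_eq (norm_nonneg m)).1 hc).resolve_right hneg
    have hm0 : 0 < ‖m‖ := (norm_nonneg m).lt_of_ne fun h => hneg (by rw [hpos, ← h, neg_zero])
    obtain ⟨r', hr', h0, hε', hlt⟩ := exists_near_abs_radicalOffset_lt hm0 hr hpos hε
    rw [← paramDist_same_center m] at h0 hε'
    exact ⟨m, r', h0, hε', hm ▸ bTrace_finite_and_ncard_eq_two hu hm0 hr' hlt⟩

/-- if `∂h_{(m,r)}` has exactly one element or is infinite, then
arbitrarily small nonzero perturbations of `(m,r)` (in the Euclidean norm on `ℝ³`)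
realize boundary traces with exactly `k` elements, for each `k ∈ {0,1,2}`. -/
theorem stmt4 (m : ℂ) (r : ℝ) (hr : 0 < r)
    (h : (bTrace m r).ncard = 1 ∨ (bTrace m r).Infinite) :
    ∀ ε > (0 : ℝ), ∀ k ∈ ({0, 1, 2} : Set ℕ), ∃ m' : ℂ, ∃ r' : ℝ,
      0 < Real.sqrt (‖m' - m‖ ^ 2 + (r' - r) ^ 2) ∧
      Real.sqrt (‖m' - m‖ ^ 2 + (r' - r) ^ 2) < ε ∧
      (bTrace m' r').Finite ∧ (bTrace m' r').ncard = k := by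
  intro ε hε k hk
  have hc := abs_radicalOffset_eq_of_ncard_eq_one_or_infinite hr.le h
  rcases hk with rfl | rfl | rfl
  · obtain ⟨r', h0, hε', hempty⟩ := exists_near_bTrace_eq_empty hr hc hε
    exact ⟨m, r', h0, hε', by simp [hempty]⟩
  · exact exists_near_bTrace_finite_and_ncard_eq_one hr.le hc hε
  · exact exists_near_bTrace_finite_and_ncard_eq_two hr hc hε
end
end

section
/- Let (m_1,r_1),…,(m_n,r_n) with m_i ∈ ℝ², r_i > 0, satisfy the geometric robustness condition: ∂h_{(m_i,r_i)} ∩ ∂h_{(m_j,r_j)} = ∅ for all i ≠ j, and each ∂h_{(m_i,r_i)} has exactly 0 or exactly 2 elements. Let H_v : S¹ → ℕ be the sum of the signal functions. Then the set ∂H_v := ⋃_{i=1}^n ∂h_{(m_i,r_i)} is finite and has exactly 2·(H_v* − H_{v*} + τ(H_v)) elements, where H_v* = max H_v, H_{v*} = min H_v. -/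
noncomputable section

open scoped BigOperators
open Classical

/-!
Parametrize `S¹` by `θ ↦ exp (iθ)` over a period `[a, a + 2π]` starting at a point that is not a
boundary point and where `H_v` attains its minimum `H_*`. The `q = #∂H_v` boundary angles cut the
period into arcs on which `H_v` is constant, with values `H_* = val 0, val 1, …, val q = H_*`.
At a boundary point exactly one circle `‖x - mᵢ‖ = rᵢ` is crossed, and transversally, since a
tangency would leave fewer or more than two points on the trace. So consecutive values differ by
one, and at the boundary point `H_v` takes the larger of them. For `H_* < k ≤ H*`, the superlevel
set `{H_v ≥ k}` is the image of a union of runs of consecutive arcs with values `≥ k`, none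
wrapping around the base point, so its components correspond to the up-crossings
`val j < k ≤ val (j + 1)`. Summing over `k`, `H* - H_* + τ(H_v) = ∑ₖ cₖ` counts the up-steps,
which are half of the `q` steps since the values return to `H_*`.
-/

open Real Set Filter Topology ComplexConjugate

lemma HasDerivAt.eventually_lt_of_pos {f : ℝ → ℝ} {f' x : ℝ} (hf : HasDerivAt f f' x)
    (hf' : 0 < f') : (∀ᶠ y in 𝓝[<] x, f y < f x) ∧ ∀ᶠ y in 𝓝[>] x, f x < f y := by
  have hslope : ∀ᶠ y in 𝓝[≠] x, 0 < slope f x y :=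
    (hasDerivAt_iff_tendsto_slope.1 hf).eventually (lt_mem_nhds hf')
  refine ⟨?_, ?_⟩
  · filter_upwards [nhdsLT_le_nhdsNE x hslope, self_mem_nhdsWithin] with y hy hyx
    exact (slope_pos_iff_gt hyx).1 hy
  · filter_upwards [nhdsGT_le_nhdsNE x hslope, self_mem_nhdsWithin] with y hy hyx
    exact (slope_pos_iff hyx).1 hy

lemma exists_strictMono_image_Icc {a b : ℝ} (hab : a < b) (Z : Finset ℝ)
    (hZ : ↑Z ⊆ Ioo a b) :
    ∃ s : ℕ → ℝ, StrictMono s ∧ s 0 = a ∧ s (Z.card + 1) = b ∧ s '' Icc 1 Z.card = Z := by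
  set q := Z.card
  set z := Z.orderEmbOfFin rfl
  have hz : ∀ i, z i ∈ Ioo a b := fun i => hZ (Z.orderEmbOfFin_mem rfl i)
  refine ⟨fun j => if j = 0 then a else if h : j - 1 < q then z ⟨j - 1, h⟩
      else b + (j - (q + 1) : ℕ), strictMono_nat_of_lt_succ fun j => ?_, by simp, by simp, ?_⟩
  · rcases j with _ | j
    · rcases Nat.eq_zero_or_pos q with hq | hq
      · simp [hq, hab]
      · simpa [hq] using (hz ⟨0, hq⟩).1
    · simp only [Nat.add_eq_zero_iff, one_ne_zero, and_false, if_false, add_tsub_cancel_right]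
      rcases lt_trichotomy (j + 1) q with h | h | h
      · rw [dif_pos (by omega), dif_pos h]
        exact z.strictMono (Fin.mk_lt_mk.2 (Nat.lt_succ_self j))
      · rw [dif_pos (by omega), dif_neg (by omega)]
        simpa [h] using (hz _).2
      · rw [dif_neg (by omega), dif_neg (by omega)]
        gcongr
        omega
  · ext θ
    constructor
    · rintro ⟨j, ⟨hj1, hjq⟩, rfl⟩
      simp only [if_neg (show j ≠ 0 by omega), dif_pos (show j - 1 < q by omega)]
      exact Z.orderEmbOfFin_mem rfl _
    · intro hθ
      obtain ⟨i, rfl⟩ : θ ∈ Set.range z := by rwa [Finset.range_orderEmbOfFin]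
      exact ⟨i + 1, ⟨by omega, i.2⟩, by simp [show (i : ℕ) < q from i.2]⟩

/-! ### Connected components of unions of intervals -/

lemma ConnectedComponents.mk_eq_mk_of_isPreconnected {α : Type*} [TopologicalSpace α]
    {X T : Set α} (hT : IsPreconnected T) (hTX : T ⊆ X) {x y : X} (hx : (x : α) ∈ T)
    (hy : (y : α) ∈ T) : ConnectedComponents.mk x = ConnectedComponents.mk y := by
  have hT' : IsPreconnected ((↑) ⁻¹' T : Set X) := by
    rwa [← Topology.IsInducing.subtypeVal.isPreconnected_image,
      image_preimage_eq_of_subset (by rwa [Subtype.range_coe])]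
  exact ConnectedComponents.coe_eq_coe'.2 (hT'.subset_connectedComponent hy hx)

lemma ConnectedComponents.mk_ne_mk_of_notMem {α : Type*} [TopologicalSpace α] [LinearOrder α]
    [OrderClosedTopology α] {X : Set α} {x y : X} {c : α} (hc : c ∉ X) (hxc : (x : α) ≤ c)
    (hcy : c ≤ y) : ConnectedComponents.mk x ≠ ConnectedComponents.mk y := by
  intro hxy
  have hpre := (isPreconnected_connectedComponent (x := x)).image Subtype.val
    continuous_subtype_val.continuousOn
  have hIcc := hpre.Icc_subset (mem_image_of_mem _ mem_connectedComponent)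
    (mem_image_of_mem _ (ConnectedComponents.coe_eq_coe'.1 hxy.symm))
  exact hc (by simpa using image_subset_range _ _ (hIcc ⟨hxc, hcy⟩))

theorem card_connectedComponents_biUnion_Icc {s : ℕ → ℝ} (hs : StrictMono s) {S : Set ℕ}
    (h0 : 0 ∉ S) :
    Nat.card (ConnectedComponents ↥(⋃ j ∈ S, Icc (s j) (s (j + 1))))
      = Nat.card {j // j ∉ S ∧ j + 1 ∈ S} := by
  set X := ⋃ j ∈ S, Icc (s j) (s (j + 1))
  have hIcc : ∀ {j}, j ∈ S → Icc (s j) (s (j + 1)) ⊆ X := fun hj =>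
    subset_biUnion_of_mem (u := fun j => Icc (s j) (s (j + 1))) hj
  have hrun : ∀ i ∈ S, ∃ j < i, j ∉ S ∧ j + 1 ∈ S ∧ Icc (s (j + 1)) (s (i + 1)) ⊆ X := by
    intro i
    induction i with
    | zero => exact fun h => absurd h h0
    | succ i ih =>
      intro hi
      by_cases hiS : i ∈ S
      · obtain ⟨j, hji, hjS, hj1S, hsub⟩ := ih hiS
        exact ⟨j, by omega, hjS, hj1S,
          Icc_subset_Icc_union_Icc.trans (union_subset hsub (hIcc hi))⟩
      · exact ⟨i, by omega, hiS, hi, hIcc hi⟩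
  have hgap : ∀ j ∉ S, (s j + s (j + 1)) / 2 ∉ X := by
    intro j hj hc
    obtain ⟨l, hl, hcl⟩ := mem_iUnion₂.1 hc
    have h1 := hs (Nat.lt_succ_self j)
    have hlj : l < j + 1 := hs.lt_iff_lt.1 (by linarith [hcl.1])
    have hjl : j < l + 1 := hs.lt_iff_lt.1 (by linarith [hcl.2])
    exact hj (by rwa [show j = l by omega])
  let f : {j // j ∉ S ∧ j + 1 ∈ S} → ConnectedComponents X := fun j =>
    .mk ⟨s (j.1 + 1), hIcc j.2.2 (left_mem_Icc.2 (hs.monotone (Nat.le_succ _)))⟩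
  have hsep : ∀ j₁ j₂ : {j // j ∉ S ∧ j + 1 ∈ S}, j₁.1 < j₂.1 → f j₁ ≠ f j₂ := by
    intro j₁ j₂ hlt
    have h := hs (Nat.lt_succ_self j₂.1)
    exact ConnectedComponents.mk_ne_mk_of_notMem (hgap _ j₂.2.1)
      ((hs.monotone hlt).trans (by linarith)) (by dsimp only; linarith)
  refine (Nat.card_eq_of_bijective f ⟨fun j₁ j₂ he => ?_, fun c => ?_⟩).symm
  · by_contra hne
    rcases lt_or_gt_of_ne (Subtype.coe_injective.ne hne) with h | h
    exacts [hsep _ _ h he, hsep _ _ h he.symm]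
  · obtain ⟨x, rfl⟩ := ConnectedComponents.surjective_coe c
    obtain ⟨i, hi, hxi⟩ := mem_iUnion₂.1 x.2
    obtain ⟨j, hji, hjS, hj1S, hsub⟩ := hrun i hi
    exact ⟨⟨j, hjS, hj1S⟩, ConnectedComponents.mk_eq_mk_of_isPreconnected isPreconnected_Icc
      hsub (left_mem_Icc.2 (hs.monotone (by omega)))
      ⟨(hs.monotone (by omega)).trans hxi.1, hxi.2⟩⟩

lemma card_connectedComponents_image_of_injOn {X Y : Type*} [TopologicalSpace X]
    [TopologicalSpace Y] [T2Space Y] {f : X → Y} (hf : Continuous f) {K : Set X}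
    (hK : IsCompact K) (hinj : InjOn f K) :
    Nat.card (ConnectedComponents ↥(f '' K)) = Nat.card (ConnectedComponents K) := by
  have : CompactSpace K := isCompact_iff_compactSpace.1 hK
  set g := K.imageFactorization f
  have hg : Continuous g := (hf.comp continuous_subtype_val).subtype_mk _
  have hginj : Function.Injective g := hinj.imageFactorization_injective
  have hquot : Topology.IsQuotientMap g :=
    hg.isClosedMap.isQuotientMap hg imageFactorization_surjective
  have hfib : ∀ y, IsConnected (g ⁻¹' {y}) := by
    intro y
    obtain ⟨x, rfl⟩ := imageFactorization_surjective y
    rw [← image_singleton, hginj.preimage_image]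
    exact isConnected_singleton
  exact (Nat.card_eq_of_bijective _
    (hquot.isCoinducing.connectedComponentsMap_bijective hfib)).symm

/-! ### Sequences of values changing by one -/

lemma exists_upcrossing {f : ℕ → ℕ} {k i : ℕ} (h0 : f 0 < k) (hi : k ≤ f i) :
    ∃ j < i, f j < k ∧ k ≤ f (j + 1) := by
  induction i with
  | zero => omega
  | succ i ih =>
    by_cases h : k ≤ f i
    · obtain ⟨j, hj, hjk⟩ := ih h
      exact ⟨j, by omega, hjk⟩
    · exact ⟨i, by omega, by omega, hi⟩

lemma sum_card_upcrossings {f : ℕ → ℕ} {m M q : ℕ} (hf : ∀ j ≤ q, m ≤ f j ∧ f j ≤ M) :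
    ∑ k ∈ Finset.Icc (m + 1) M, ((Finset.range q).filter fun j => f j < k ∧ k ≤ f (j + 1)).card
      = ∑ j ∈ Finset.range q, (f (j + 1) - f j) := by
  simp only [Finset.card_filter]
  rw [Finset.sum_comm]
  refine Finset.sum_congr rfl fun j hj => ?_
  have hj := Finset.mem_range.1 hj
  have h₁ := hf j hj.le
  have h₂ := hf (j + 1) hj
  rw [← Finset.card_filter, ← Nat.card_Ioc]
  congr 1
  ext k
  simp only [Finset.mem_filter, Finset.mem_Icc, Finset.mem_Ioc]
  omega

lemma two_mul_sum_tsub_eq {f : ℕ → ℕ} {q : ℕ}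
    (hstep : ∀ j < q, f j = f (j + 1) + 1 ∨ f (j + 1) = f j + 1) (hper : f q = f 0) :
    2 * ∑ j ∈ Finset.range q, (f (j + 1) - f j) = q := by
  have hsum : ∑ j ∈ Finset.range q, (f (j + 1) - f j)
      + ∑ j ∈ Finset.range q, (f j - f (j + 1)) = q := by
    rw [← Finset.sum_add_distrib, Finset.sum_congr rfl fun j hj =>
      show f (j + 1) - f j + (f j - f (j + 1)) = 1 by
        have := hstep j (Finset.mem_range.1 hj); omega]
    simp
  have hdiff : ∑ j ∈ Finset.range q, ((f (j + 1) - f j : ℕ) : ℤ)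
      = ∑ j ∈ Finset.range q, ((f j - f (j + 1) : ℕ) : ℤ) := by
    rw [← sub_eq_zero, ← Finset.sum_sub_distrib]
    calc _ = ∑ j ∈ Finset.range q, ((f (j + 1) : ℤ) - f j) :=
          Finset.sum_congr rfl fun j _ => by omega
      _ = 0 := by rw [Finset.sum_range_sub (fun j => (f j : ℤ)), hper, sub_self]
  have hUD : ∑ j ∈ Finset.range q, (f (j + 1) - f j)
      = ∑ j ∈ Finset.range q, (f j - f (j + 1)) := by exact_mod_cast hdiff
  omega

/-! ### Jump sequences -/

def stepValue (G : ℝ → ℕ) (s : ℕ → ℝ) (j : ℕ) : ℕ := G ((s j + s (j + 1)) / 2)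

structure IsJumpSeq (G : ℝ → ℕ) (s : ℕ → ℝ) (q : ℕ) : Prop where
  strictMono : StrictMono s
  continuousAt : ∀ θ ∈ Icc (s 0) (s (q + 1)), θ ∉ s '' Icc 1 q → ContinuousAt G θ
  jump : ∀ j ∈ Icc 1 q, ∃ u w : ℕ, (u = w + 1 ∨ w = u + 1) ∧ G (s j) = max u w ∧
    (∀ᶠ θ in 𝓝[<] s j, G θ = u) ∧ ∀ᶠ θ in 𝓝[>] s j, G θ = w

namespace IsJumpSeq

variable {G : ℝ → ℕ} {s : ℕ → ℝ} {q : ℕ}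

lemma apply_eq_of_isPreconnected (h : IsJumpSeq G s q) {T : Set ℝ} (hT : IsPreconnected T)
    (hTsub : T ⊆ Icc (s 0) (s (q + 1))) (hTjump : ∀ j ∈ Icc 1 q, s j ∉ T) {x y : ℝ}
    (hx : x ∈ T) (hy : y ∈ T) : G x = G y :=
  hT.constant (fun θ hθ => (h.continuousAt θ (hTsub hθ) (by
    rintro ⟨j, hj, rfl⟩
    exact hTjump j hj hθ)).continuousWithinAt) hx hy

lemma mid_mem_Ioo (h : IsJumpSeq G s q) (j : ℕ) :
    (s j + s (j + 1)) / 2 ∈ Ioo (s j) (s (j + 1)) :=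
  have := h.strictMono (Nat.lt_succ_self j)
  ⟨by linarith, by linarith⟩

lemma apply_eq_stepValue (h : IsJumpSeq G s q) {j : ℕ} (hj : j ≤ q) {θ : ℝ}
    (hθ : θ ∈ Ioo (s j) (s (j + 1))) : G θ = stepValue G s j := by
  refine h.apply_eq_of_isPreconnected isPreconnected_Ioo (Ioo_subset_Icc_self.trans
    (Icc_subset_Icc (h.strictMono.monotone (Nat.zero_le j)) (h.strictMono.monotone (by omega))))
    (fun l _ hl => ?_) hθ (h.mid_mem_Ioo j)
  have := h.strictMono.lt_iff_lt.1 hl.1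
  have := h.strictMono.lt_iff_lt.1 hl.2
  omega

lemma apply_zero (h : IsJumpSeq G s q) : G (s 0) = stepValue G s 0 := by
  refine h.apply_eq_of_isPreconnected isPreconnected_Ico (Ico_subset_Icc_self.trans
    (Icc_subset_Icc le_rfl (h.strictMono.monotone (by omega)))) (fun l hl hlT => ?_)
    (left_mem_Ico.2 (h.strictMono Nat.zero_lt_one)) (Ioo_subset_Ico_self (h.mid_mem_Ioo 0))
  have := h.strictMono.lt_iff_lt.1 hlT.2
  exact absurd hl.1 (by omega)

lemma apply_last (h : IsJumpSeq G s q) : G (s (q + 1)) = stepValue G s q := by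
  refine h.apply_eq_of_isPreconnected isPreconnected_Ioc (Ioc_subset_Icc_self.trans
    (Icc_subset_Icc (h.strictMono.monotone (Nat.zero_le q)) le_rfl)) (fun l hl hlT => ?_)
    (right_mem_Ioc.2 (h.strictMono (Nat.lt_succ_self q)))
    (Ioo_subset_Ioc_self (h.mid_mem_Ioo q))
  have := h.strictMono.lt_iff_lt.1 hlT.1
  exact absurd hl.2 (by omega)

lemma apply_jump (h : IsJumpSeq G s q) {j : ℕ} (hj : j < q) :
    (stepValue G s j = stepValue G s (j + 1) + 1 ∨
        stepValue G s (j + 1) = stepValue G s j + 1) ∧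
      G (s (j + 1)) = max (stepValue G s j) (stepValue G s (j + 1)) := by
  obtain ⟨u, w, huw, hmax, hu, hw⟩ := h.jump (j + 1) ⟨by omega, hj⟩
  obtain ⟨θ, hθu, hθ⟩ :=
    (hu.and (Ioo_mem_nhdsLT (h.strictMono (Nat.lt_succ_self j)))).exists
  obtain ⟨θ', hθ'w, hθ'⟩ :=
    (hw.and (Ioo_mem_nhdsGT (h.strictMono (Nat.lt_succ_self (j + 1))))).exists
  rw [← h.apply_eq_stepValue hj.le hθ, ← h.apply_eq_stepValue hj hθ', hθu, hθ'w]
  exact ⟨huw, hmax⟩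

lemma stepValue_le_apply (h : IsJumpSeq G s q) {j : ℕ} (hj : j ≤ q) {θ : ℝ}
    (hθ : θ ∈ Icc (s j) (s (j + 1))) : stepValue G s j ≤ G θ := by
  rcases eq_endpoints_or_mem_Ioo_of_mem_Icc hθ with rfl | rfl | hθ
  · rcases j with _ | i
    · exact h.apply_zero.ge
    · exact (h.apply_jump (by omega : i < q)).2 ▸ le_max_right _ _
  · rcases hj.lt_or_eq with hj | rfl
    · exact (h.apply_jump hj).2 ▸ le_max_left _ _
    · exact h.apply_last.ge
  · exact (h.apply_eq_stepValue hj hθ).ge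

lemma superlevel_eq (h : IsJumpSeq G s q) {k : ℕ} (hk₀ : stepValue G s 0 < k)
    (hkq : stepValue G s q < k) :
    {θ ∈ Ico (s 0) (s (q + 1)) | k ≤ G θ}
      = ⋃ j ∈ {j | j ≤ q ∧ k ≤ stepValue G s j}, Icc (s j) (s (j + 1)) := by
  ext θ
  simp only [mem_iUnion, Set.mem_ofPred_eq, exists_prop]
  constructor
  · rintro ⟨hθ, hk⟩
    obtain ⟨j, hj, hθj⟩ := mem_iUnion₂.1 (Ico_subset_biUnion_Ico (q + 1) s hθ)
    have hj := Finset.mem_range.1 hj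
    rcases hθj.1.eq_or_lt with rfl | hlt
    · rcases j with _ | i
      · exact absurd (h.apply_zero ▸ hk) (by omega)
      · rw [(h.apply_jump (by omega : i < q)).2, le_max_iff] at hk
        rcases hk with hk | hk
        · exact ⟨i, ⟨by omega, hk⟩, right_mem_Icc.2 (h.strictMono (Nat.lt_succ_self i)).le⟩
        · exact ⟨i + 1, ⟨by omega, hk⟩, Ico_subset_Icc_self hθj⟩
    · exact ⟨j, ⟨by omega, h.apply_eq_stepValue (by omega) ⟨hlt, hθj.2⟩ ▸ hk⟩,
        Ico_subset_Icc_self hθj⟩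
  · rintro ⟨j, ⟨hjq, hkj⟩, hθ⟩
    refine ⟨⟨(h.strictMono.monotone (Nat.zero_le j)).trans hθ.1, (hθ.2.trans
      (h.strictMono.monotone (by omega : j + 1 ≤ q + 1))).lt_of_ne ?_⟩,
      hkj.trans (h.stepValue_le_apply hjq hθ)⟩
    rintro rfl
    have := h.strictMono.le_iff_le.1 hθ.2
    obtain rfl : j = q := by omega
    omega

end IsJumpSeq

/-! ### Circles and disks -/

lemma continuous_coe_circleExp : Continuous fun θ : ℝ => (Circle.exp θ : ℂ) :=
  continuous_subtype_val.comp Circle.exp.continuous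

lemma injOn_circleExp_Ico (a : ℝ) :
    InjOn (fun θ : ℝ => (Circle.exp θ : ℂ)) (Ico a (a + 2 * π)) :=
  Subtype.val_injective.comp_injOn (Circle.exp_injOn_Ico (by linarith))

lemma exists_circleExp_eq {x : ℂ} (hx : ‖x‖ = 1) (a : ℝ) :
    ∃ θ ∈ Ico a (a + 2 * π), (Circle.exp θ : ℂ) = x := by
  obtain ⟨t, ht⟩ := Circle.exp_surjective ⟨x, mem_sphere_zero_iff_norm.2 hx⟩
  obtain ⟨θ, hθ, hθt⟩ := Circle.periodic_exp.exists_mem_Ico two_pi_pos t a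
  exact ⟨θ, hθ, by rw [← hθt, ht]⟩

lemma S1_infinite : S1.Infinite := by
  have hinj := injOn_circleExp_Ico 0
  rw [zero_add] at hinj
  exact ((Ico_infinite two_pi_pos).image hinj).mono
    (by rintro _ ⟨θ, -, rfl⟩; exact Circle.norm_coe _)

lemma superlevel_eq_image (H : ℂ → ℕ) (k : ℕ) (a : ℝ) :
    superlevel H k = (fun θ : ℝ => (Circle.exp θ : ℂ)) ''
      {θ ∈ Ico a (a + 2 * π) | k ≤ H (Circle.exp θ)} := by
  ext x
  constructor
  · rintro ⟨hx, hk⟩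
    obtain ⟨θ, hθ, rfl⟩ := exists_circleExp_eq hx a
    exact ⟨θ, ⟨hθ, hk⟩, rfl⟩
  · rintro ⟨θ, ⟨-, hk⟩, rfl⟩
    exact ⟨Circle.norm_coe _, hk⟩

lemma finite_circleExp_preimage_Ico {B : Set ℂ} (hB : B.Finite) (a : ℝ) :
    {θ ∈ Ico a (a + 2 * π) | (Circle.exp θ : ℂ) ∈ B}.Finite :=
  (hB.subset (by rintro _ ⟨θ, hθ, rfl⟩; exact hθ.2)).of_finite_image
    ((injOn_circleExp_Ico a).mono fun _ hθ => hθ.1)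

lemma countable_circleExp_preimage {B : Set ℂ} (hB : B.Finite) :
    {θ : ℝ | (Circle.exp θ : ℂ) ∈ B}.Countable := by
  refine (countable_iUnion fun n : ℤ => ((finite_circleExp_preimage_Ico hB 0).image
    (· + n * (2 * π))).countable).mono fun θ hθ => ?_
  obtain ⟨y, hy, hθy⟩ := Circle.periodic_exp.exists_mem_Ico two_pi_pos θ 0
  obtain ⟨n, hn⟩ := Circle.exp_eq_exp.1 hθy
  exact mem_iUnion.2 ⟨n, y, ⟨hy, by rwa [← hθy]⟩, hn.symm⟩

lemma norm_sub_sq_eq {x : ℂ} (hx : ‖x‖ = 1) (m : ℂ) :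
    ‖x - m‖ ^ 2 = 1 + ‖m‖ ^ 2 - 2 * (x * conj m).re := by
  rw [← Complex.normSq_eq_norm_sq, Complex.normSq_sub, Complex.normSq_eq_norm_sq,
    Complex.normSq_eq_norm_sq, hx, one_pow]

/-- If `x * conj m` were real, every point `y` of the trace would have `y * conj m` with the same
real part and modulus, hence equal to it: the trace would be `{x}`, or all of `S¹` if `m = 0`. -/
lemma im_mul_conj_ne_zero_of_mem_bTrace {m : ℂ} {r : ℝ} (h2 : (bTrace m r).ncard = 2) {x : ℂ}
    (hx : x ∈ bTrace m r) : (x * conj m).im ≠ 0 := by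
  intro him
  by_cases hm : m = 0
  · subst hm
    have : bTrace 0 r = S1 := by
      ext y
      simp only [bTrace, S1, sub_zero, Set.mem_ofPred_eq, ← hx.2, hx.1]
      exact ⟨fun h => h.1, fun h => ⟨h, h⟩⟩
    rw [this, S1_infinite.ncard] at h2
    omega
  · have hsub : bTrace m r ⊆ {x} := by
      intro y hy
      have hre : (y * conj m).re = (x * conj m).re := by
        have h₁ := norm_sub_sq_eq hy.1 m
        have h₂ := norm_sub_sq_eq hx.1 m
        rw [hy.2] at h₁
        rw [hx.2] at h₂
        linarith
      have hnorm : ‖y * conj m‖ = ‖x * conj m‖ := by simp [hy.1, hx.1]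
      have him' : (y * conj m).im = 0 := by
        rw [← Complex.abs_re_eq_norm, hre, hnorm, Complex.abs_re_eq_norm.2 him]
      exact mul_right_cancel₀ ((map_ne_zero _).2 hm) (Complex.ext hre (him'.trans him.symm))
    have := (ncard_le_ncard hsub (finite_singleton x)).trans (ncard_singleton x).le
    omega

lemma signal_le_one (m : ℂ) (r : ℝ) (x : ℂ) : signal m r x ≤ 1 := by
  unfold signal
  split_ifs <;> omega

lemma signal_eventually_eq {m x : ℂ} {r : ℝ} (hx : ‖x - m‖ ≠ r) :
    ∀ᶠ y in 𝓝 x, signal m r y = signal m r x := by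
  have hcont : Continuous fun y : ℂ => ‖y - m‖ := by fun_prop
  rcases hx.lt_or_gt with h | h
  · filter_upwards [hcont.continuousAt.eventually_lt continuousAt_const h] with y hy
    simp [signal, hy.le, h.le]
  · filter_upwards [continuousAt_const.eventually_lt hcont.continuousAt h] with y hy
    simp [signal, not_le.2 hy, not_le.2 h]

lemma signal_eventually_le (m : ℂ) (r : ℝ) (x : ℂ) :
    ∀ᶠ y in 𝓝 x, signal m r y ≤ signal m r x := by
  by_cases hx : ‖x - m‖ ≤ r
  · exact Eventually.of_forall fun y => (signal_le_one m r y).trans (by simp [signal, hx])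
  · exact (signal_eventually_eq (ne_of_gt (not_le.1 hx))).mono fun y hy => hy.le

lemma signal_crossing {m : ℂ} {r : ℝ} (h2 : (bTrace m r).ncard = 2) {β : ℝ}
    (hβ : (Circle.exp β : ℂ) ∈ bTrace m r) :
    ∃ u w : ℕ, u + w = 1 ∧ (∀ᶠ θ in 𝓝[<] β, signal m r (Circle.exp θ) = u) ∧
      ∀ᶠ θ in 𝓝[>] β, signal m r (Circle.exp θ) = w := by
  set g : ℝ → ℝ := fun θ => ((Circle.exp θ : ℂ) * conj m).re
  have hsignal : ∀ θ, signal m r (Circle.exp θ) = if g β ≤ g θ then 1 else 0 := by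
    intro θ
    have h₁ := norm_sub_sq_eq (Circle.norm_coe (Circle.exp θ)) m
    have h₂ := norm_sub_sq_eq hβ.1 m
    rw [hβ.2] at h₂
    refine if_congr ?_ rfl rfl
    rw [← sq_le_sq₀ (norm_nonneg _) (hβ.2 ▸ norm_nonneg _), h₁, h₂]
    constructor <;> intro h <;> linarith
  have hg : HasDerivAt g (-((Circle.exp β : ℂ) * conj m).im) β := by
    have := ((((hasDerivAt_id (β : ℂ)).mul_const Complex.I).cexp).mul_const
      (conj m)).real_of_complex
    refine this.congr_deriv ?_
    rw [id, one_mul, mul_right_comm, Complex.mul_I_re, Circle.coe_exp]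
  rcases (im_mul_conj_ne_zero_of_mem_bTrace h2 hβ).lt_or_gt with hneg | hpos
  · obtain ⟨hl, hr⟩ := hg.eventually_lt_of_pos (by linarith)
    exact ⟨0, 1, rfl, hl.mono fun θ hθ => by rw [hsignal, if_neg (not_le.2 hθ)],
      hr.mono fun θ hθ => by rw [hsignal, if_pos hθ.le]⟩
  · obtain ⟨hl, hr⟩ := hg.neg.eventually_lt_of_pos (by simpa using hpos)
    exact ⟨1, 0, rfl, hl.mono fun θ hθ => by rw [hsignal, if_pos (neg_lt_neg_iff.1 hθ).le],
      hr.mono fun θ hθ => by rw [hsignal, if_neg (not_le.2 (neg_lt_neg_iff.1 hθ))]⟩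

/-! ### Sums of signals -/

def bTraceUnion {n : ℕ} (v : Fin n → ℂ × ℝ) : Set ℂ := ⋃ i, bTrace (v i).1 (v i).2

section Hsum

variable {n : ℕ} (v : Fin n → ℂ × ℝ)

lemma Hsum_le (x : ℂ) : Hsum v x ≤ n :=
  calc Hsum v x ≤ ∑ _i : Fin n, 1 := Finset.sum_le_sum fun i _ => signal_le_one _ _ _
    _ = n := by simp

lemma Hsum_eventually_le (x : ℂ) : ∀ᶠ y in 𝓝 x, Hsum v y ≤ Hsum v x := by
  filter_upwards [eventually_all.2 fun i => signal_eventually_le (v i).1 (v i).2 x] with y hy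
  exact Finset.sum_le_sum fun i _ => hy i

lemma Hsum_eventually_eq {x : ℂ} (hx : ‖x‖ = 1) (hxB : x ∉ bTraceUnion v) :
    ∀ᶠ y in 𝓝 x, Hsum v y = Hsum v x := by
  have h : ∀ i, ∀ᶠ y in 𝓝 x, signal (v i).1 (v i).2 y = signal (v i).1 (v i).2 x :=
    fun i => signal_eventually_eq fun h => hxB (mem_iUnion.2 ⟨i, hx, h⟩)
  filter_upwards [eventually_all.2 h] with y hy
  exact Finset.sum_congr rfl fun i _ => hy i

variable {v}

lemma Hsum_jump (hdisj : ∀ i j : Fin n, i ≠ j →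
      bTrace (v i).1 (v i).2 ∩ bTrace (v j).1 (v j).2 = ∅)
    (hcard : ∀ i : Fin n,
      bTrace (v i).1 (v i).2 = ∅ ∨ (bTrace (v i).1 (v i).2).ncard = 2)
    {β : ℝ} (hβ : (Circle.exp β : ℂ) ∈ bTraceUnion v) :
    ∃ u w : ℕ, (u = w + 1 ∨ w = u + 1) ∧ Hsum v (Circle.exp β) = max u w ∧
      (∀ᶠ θ in 𝓝[<] β, Hsum v (Circle.exp θ) = u) ∧
      ∀ᶠ θ in 𝓝[>] β, Hsum v (Circle.exp θ) = w := by
  obtain ⟨i, hi⟩ := mem_iUnion.1 hβ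
  obtain ⟨u, w, huw, hu, hw⟩ :=
    signal_crossing ((hcard i).resolve_left (nonempty_of_mem hi).ne_empty) hi
  set rest : ℝ → ℕ := fun θ =>
    ∑ j ∈ Finset.univ.erase i, signal (v j).1 (v j).2 (Circle.exp θ)
  have hsplit : ∀ θ, Hsum v (Circle.exp θ) = signal (v i).1 (v i).2 (Circle.exp θ) + rest θ :=
    fun θ => (Finset.add_sum_erase _ _ (Finset.mem_univ i)).symm
  have hrest : ∀ᶠ θ in 𝓝 β, rest θ = rest β := by
    have h : ∀ j ∈ Finset.univ.erase i, ∀ᶠ θ in 𝓝 β,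
        signal (v j).1 (v j).2 (Circle.exp θ) = signal (v j).1 (v j).2 (Circle.exp β) := by
      intro j hj
      refine (continuous_coe_circleExp.tendsto β).eventually (signal_eventually_eq fun h => ?_)
      exact (eq_empty_iff_forall_notMem.1 (hdisj j i (Finset.ne_of_mem_erase hj))) _
        ⟨⟨Circle.norm_coe _, h⟩, hi⟩
    filter_upwards [(eventually_all_finset _).2 h] with θ hθ
    exact Finset.sum_congr rfl hθ
  have hβi : signal (v i).1 (v i).2 (Circle.exp β) = 1 := if_pos hi.2.le
  refine ⟨u + rest β, w + rest β, by omega, by rw [hsplit, hβi]; omega, ?_, ?_⟩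
  · filter_upwards [hu, nhdsWithin_le_nhds hrest] with θ h₁ h₂
    rw [hsplit, h₁, h₂]
  · filter_upwards [hw, nhdsWithin_le_nhds hrest] with θ h₁ h₂
    rw [hsplit, h₁, h₂]

end Hsum

lemma exists_circleExp_notMem_eq_minOnS1 {B : Set ℂ} (hB : B.Finite) {H : ℂ → ℕ}
    (hH : ∀ x, ∀ᶠ y in 𝓝 x, H y ≤ H x) :
    ∃ a : ℝ, (Circle.exp a : ℂ) ∉ B ∧ H (Circle.exp a) = minOnS1 H := by
  obtain ⟨x, hx, hxm⟩ := Nat.sInf_mem (⟨H 1, 1, by simp [S1], rfl⟩ : (H '' S1).Nonempty)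
  obtain ⟨θ₀, -, rfl⟩ := exists_circleExp_eq hx 0
  obtain ⟨a, haU, haB⟩ := mem_closure_iff_nhds.1
    ((countable_circleExp_preimage hB).dense_compl ℝ θ₀) _
    ((continuous_coe_circleExp.tendsto θ₀).eventually (hH _))
  exact ⟨a, haB, le_antisymm (haU.trans hxm.le) (Nat.sInf_le ⟨_, Circle.norm_coe _, rfl⟩)⟩

lemma exists_isJumpSeq {n : ℕ} {v : Fin n → ℂ × ℝ}
    (hdisj : ∀ i j : Fin n, i ≠ j →
      bTrace (v i).1 (v i).2 ∩ bTrace (v j).1 (v j).2 = ∅)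
    (hcard : ∀ i : Fin n,
      bTrace (v i).1 (v i).2 = ∅ ∨ (bTrace (v i).1 (v i).2).ncard = 2)
    (hB : (bTraceUnion v).Finite) {a : ℝ} (ha : (Circle.exp a : ℂ) ∉ bTraceUnion v) :
    ∃ s : ℕ → ℝ, IsJumpSeq (fun θ => Hsum v (Circle.exp θ)) s (bTraceUnion v).ncard ∧
      s 0 = a ∧ s ((bTraceUnion v).ncard + 1) = a + 2 * π := by
  set B := bTraceUnion v
  set Z := {θ ∈ Ioo a (a + 2 * π) | (Circle.exp θ : ℂ) ∈ B}
  have hZ : Z.Finite := (finite_circleExp_preimage_Ico hB a).subset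
    fun θ hθ => ⟨Ioo_subset_Ico_self hθ.1, hθ.2⟩
  have hZB : hZ.toFinset.card = B.ncard := by
    rw [← ncard_eq_toFinset_card _ hZ, ← InjOn.ncard_image
      ((injOn_circleExp_Ico a).mono fun θ hθ => Ioo_subset_Ico_self hθ.1)]
    congr 1
    ext x
    constructor
    · rintro ⟨θ, hθ, rfl⟩
      exact hθ.2
    · intro hx
      obtain ⟨i, hi⟩ := mem_iUnion.1 hx
      obtain ⟨θ, hθ, rfl⟩ := exists_circleExp_eq hi.1 a
      exact ⟨θ, ⟨⟨hθ.1.lt_of_ne (by rintro rfl; exact ha hx), hθ.2⟩, hx⟩, rfl⟩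
  obtain ⟨s, hs, hs0, hsq, himg⟩ := exists_strictMono_image_Icc
    (by linarith [two_pi_pos] : a < a + 2 * π) hZ.toFinset
    (by rw [Finite.coe_toFinset]; exact fun θ hθ => hθ.1)
  rw [hZB] at hsq himg
  rw [Finite.coe_toFinset] at himg
  refine ⟨s, ⟨hs, fun θ hθ hθZ => ?_, fun j hj => ?_⟩, hs0, hsq⟩
  · rw [hs0, hsq] at hθ
    have hθB : (Circle.exp θ : ℂ) ∉ B := by
      rcases eq_endpoints_or_mem_Ioo_of_mem_Icc hθ with rfl | rfl | hθ'
      · exact ha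
      · rwa [Circle.exp_add_two_pi]
      · exact fun h => hθZ (himg ▸ ⟨hθ', h⟩)
    rw [ContinuousAt, nhds_discrete ℕ, tendsto_pure]
    exact (continuous_coe_circleExp.tendsto θ).eventually
      (Hsum_eventually_eq v (Circle.norm_coe _) hθB)
  · have hsZ : s j ∈ Z := himg ▸ mem_image_of_mem s hj
    exact Hsum_jump hdisj hcard hsZ.2

namespace IsJumpSeq

variable {H : ℂ → ℕ} {s : ℕ → ℝ} {q : ℕ}

lemma numCC_superlevel_eq (hH : IsJumpSeq (fun θ => H (Circle.exp θ)) s q)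
    (hsq : s (q + 1) = s 0 + 2 * π) {k : ℕ}
    (hk₀ : stepValue (fun θ => H (Circle.exp θ)) s 0 < k)
    (hkq : stepValue (fun θ => H (Circle.exp θ)) s q < k) :
    numCC (superlevel H k) = ((Finset.range q).filter fun j =>
      stepValue (fun θ => H (Circle.exp θ)) s j < k ∧
        k ≤ stepValue (fun θ => H (Circle.exp θ)) s (j + 1)).card := by
  set f := stepValue (fun θ => H (Circle.exp θ)) s
  set S := {j | j ≤ q ∧ k ≤ f j}
  have hX := hH.superlevel_eq hk₀ hkq
  rw [hsq] at hX
  have hXsub : (⋃ j ∈ S, Icc (s j) (s (j + 1))) ⊆ Ico (s 0) (s 0 + 2 * π) :=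
    hX ▸ sep_subset _ _
  have hXcpt : IsCompact (⋃ j ∈ S, Icc (s j) (s (j + 1))) :=
    ((finite_Iic q).subset fun j hj => hj.1).isCompact_biUnion fun _ _ => isCompact_Icc
  rw [numCC, superlevel_eq_image H k (s 0), hX, card_connectedComponents_image_of_injOn
    continuous_coe_circleExp hXcpt ((injOn_circleExp_Ico _).mono hXsub),
    card_connectedComponents_biUnion_Icc hH.strictMono (fun h => by simp [S] at h; omega),
    ← Nat.card_eq_finsetCard]
  exact Nat.card_congr (Equiv.subtypeEquivRight fun j => by simp [S]; omega)

theorem eq_two_mul_max_sub_min_add_tau (hH : IsJumpSeq (fun θ => H (Circle.exp θ)) s q)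
    (hsq : s (q + 1) = s 0 + 2 * π) (hmin : H (Circle.exp (s 0)) = minOnS1 H)
    (hbdd : BddAbove (H '' S1)) :
    q = 2 * (maxOnS1 H - minOnS1 H + tau H) := by
  set f := stepValue (fun θ => H (Circle.exp θ)) s
  set m := minOnS1 H
  set M := maxOnS1 H
  have hm : ∀ θ : ℝ, m ≤ H (Circle.exp θ) := fun θ => Nat.sInf_le ⟨_, Circle.norm_coe _, rfl⟩
  have hM : ∀ θ : ℝ, H (Circle.exp θ) ≤ M :=
    fun θ => le_csSup hbdd ⟨_, Circle.norm_coe _, rfl⟩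
  have hf₀ : f 0 = m := hH.apply_zero.symm.trans hmin
  have hfq : f q = f 0 :=
    calc f q = H (Circle.exp (s (q + 1))) := hH.apply_last.symm
      _ = H (Circle.exp (s 0)) := by rw [hsq, Circle.exp_add_two_pi]
      _ = f 0 := hH.apply_zero
  have hcc : ∀ k ∈ Finset.Icc (m + 1) M, numCC (superlevel H k)
      = ((Finset.range q).filter fun j => f j < k ∧ k ≤ f (j + 1)).card := fun k hk =>
    have hk := Finset.mem_Icc.1 hk
    hH.numCC_superlevel_eq hsq (show f 0 < k by omega) (show f q < k by omega)
  have hpos : ∀ k ∈ Finset.Icc (m + 1) M, 1 ≤ numCC (superlevel H k) := by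
    intro k hk
    rw [hcc k hk]
    have hk := Finset.mem_Icc.1 hk
    obtain ⟨x, hx, hxM⟩ := Nat.sSup_mem (⟨H 1, 1, by simp [S1], rfl⟩ : (H '' S1).Nonempty) hbdd
    obtain ⟨θ, hθ, rfl⟩ := exists_circleExp_eq hx (s 0)
    have hθk : θ ∈ {θ ∈ Ico (s 0) (s (q + 1)) | k ≤ H (Circle.exp θ)} :=
      ⟨hsq ▸ hθ, hxM ▸ hk.2⟩
    rw [hH.superlevel_eq (show f 0 < k by omega) (show f q < k by omega)] at hθk
    obtain ⟨i, ⟨hiq, hki⟩, -⟩ := mem_iUnion₂.1 hθk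
    obtain ⟨j, hji, hjk⟩ := exists_upcrossing (f := f) (by omega) hki
    exact Finset.card_pos.2 ⟨j, Finset.mem_filter.2 ⟨Finset.mem_range.2 (by omega), hjk⟩⟩
  have htau : M - m + tau H = ∑ k ∈ Finset.Icc (m + 1) M, numCC (superlevel H k) := by
    show M - m + ∑ k ∈ Finset.Icc (m + 1) M, (numCC (superlevel H k) - 1) = _
    rw [← Finset.sum_congr rfl fun k hk => Nat.sub_add_cancel (hpos k hk),
      Finset.sum_add_distrib, Finset.sum_const, Nat.card_Icc, smul_eq_mul, mul_one]
    omega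
  rw [htau, Finset.sum_congr rfl hcc, sum_card_upcrossings (f := f) fun j _ => ⟨hm _, hM _⟩,
    two_mul_sum_tsub_eq (fun j hj => (hH.apply_jump hj).1) hfq]

end IsJumpSeq

theorem stmt8_general {n : ℕ} (v : Fin n → ℂ × ℝ)
    (hdisj : ∀ i j : Fin n, i ≠ j →
      bTrace (v i).1 (v i).2 ∩ bTrace (v j).1 (v j).2 = ∅)
    (hcard : ∀ i : Fin n,
      bTrace (v i).1 (v i).2 = ∅ ∨ (bTrace (v i).1 (v i).2).ncard = 2) :
    (⋃ i : Fin n, bTrace (v i).1 (v i).2).Finite ∧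
    (⋃ i : Fin n, bTrace (v i).1 (v i).2).ncard
      = 2 * (maxOnS1 (Hsum v) - minOnS1 (Hsum v) + tau (Hsum v)) := by
  have hB : (bTraceUnion v).Finite := finite_iUnion fun i => by
    rcases hcard i with h | h
    · simp [h]
    · exact finite_of_ncard_ne_zero (by omega)
  obtain ⟨a, ha, hmin⟩ := exists_circleExp_notMem_eq_minOnS1 hB (Hsum_eventually_le v)
  obtain ⟨s, hs, rfl, hsq⟩ := exists_isJumpSeq hdisj hcard hB ha
  exact ⟨hB, hs.eq_two_mul_max_sub_min_add_tau hsq hmin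
    ⟨n, by rintro _ ⟨x, -, rfl⟩; exact Hsum_le v x⟩⟩

/-- under the geometric robustness condition, the set of boundary
points `∂H_v` is finite with exactly `2 (H_v* − H_{v*} + τ(H_v))` elements. -/
theorem stmt8 {n : ℕ} (v : Fin n → ℂ × ℝ) (hr : ∀ i, 0 < (v i).2)
    (hdisj : ∀ i j : Fin n, i ≠ j →
      bTrace (v i).1 (v i).2 ∩ bTrace (v j).1 (v j).2 = ∅)
    (hcard : ∀ i : Fin n,
      bTrace (v i).1 (v i).2 = ∅ ∨ (bTrace (v i).1 (v i).2).ncard = 2) :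
    (⋃ i : Fin n, bTrace (v i).1 (v i).2).Finite ∧
    (⋃ i : Fin n, bTrace (v i).1 (v i).2).ncard
      = 2 * (maxOnS1 (Hsum v) - minOnS1 (Hsum v) + tau (Hsum v)) :=
  stmt8_general v hdisj hcard
end
end
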